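/- arXiv:1703.10192 — 5 statements merged into one kernel-verified Lean document; each statement's English description precedes it below -/
import Mathlib

section
/- Let H > 0, x ∈ ℝ, and let f : [0,H] → ℝ be continuously differentiable with f(0) ≠ x, f(H) ≠ x, and f'(t) ≠ 0 for every t ∈ [0,H] with f(t) = x. Then the set Z = {t ∈ [0,H] : f(t) = x} is finite, and (1/(2δ)) ∫₀^H |f'(t)| · 1_{|f(t)−x| ≤ δ} dt tends to the cardinality of Z as δ → 0⁺. (Kac's counting formula.) -/
/-!
Near a zero `z`, the condition `f' z ≠ 0` makes `f` injective on a small window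
`[z - r, z + r]` whose endpoint values lie on opposite sides of `x`. So the zeros are isolated,
hence finitely many in the compact `[0, H]`. Away from the windows `|f - x|` is bounded below,
so for small `δ` the set `{|f - x| ≤ δ}` splits into its disjoint pieces inside the windows, and on
each piece the substitution `y = f t` turns `∫ |f'|` into the length `2δ` of `[x - δ, x + δ]`.
-/

open MeasureTheory Filter Set Topology Metric

theorem ContinuousOn.measurableSet_inter_preimage {α β : Type*} [TopologicalSpace α]
    [MeasurableSpace α] [OpensMeasurableSpace α] [TopologicalSpace β] [MeasurableSpace β]
    [BorelSpace β] {f : α → β} {s : Set α} {t : Set β} (hf : ContinuousOn f s)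
    (hs : MeasurableSet s) (ht : MeasurableSet t) : MeasurableSet (s ∩ f ⁻¹' t) := by
  classical
  rcases s.eq_empty_or_nonempty with rfl | ⟨a, -⟩
  · simp
  have h := hf.measurable_piecewise (continuousOn_const (c := f a)) hs ht
  convert hs.inter h using 1
  ext t
  simp +contextual

theorem setIntegral_abs_deriv_inter_preimage {f f' : ℝ → ℝ} {a b : ℝ} {J : Set ℝ}
    (hab : a ≤ b) (hf : ∀ t ∈ Icc a b, HasDerivWithinAt f (f' t) (Icc a b) t)
    (hinj : InjOn f (Icc a b)) (hJ : MeasurableSet J) (hJab : J ⊆ uIcc (f a) (f b)) :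
    ∫ t in Icc a b ∩ f ⁻¹' J, |f' t| = volume.real J := by
  have hfc : ContinuousOn f (Icc a b) := fun t ht => (hf t ht).continuousWithinAt
  have himage : f '' (Icc a b ∩ f ⁻¹' J) = J := by
    rw [image_inter_preimage, inter_eq_right, ← uIcc_of_le hab]
    exact hJab.trans (intermediate_value_uIcc (uIcc_of_le hab ▸ hfc))
  have := integral_image_eq_integral_abs_deriv_smul
    (hfc.measurableSet_inter_preimage measurableSet_Icc hJ)
    (fun t ht => (hf t ht.1).mono inter_subset_left) (hinj.mono inter_subset_left)
    fun _ => (1 : ℝ)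
  rw [himage] at this
  simpa using this.symm

theorem strictMonoOn_or_strictAntiOn_of_hasDerivWithinAt_ne_zero {D : Set ℝ} (hD : Convex ℝ D)
    {f f' : ℝ → ℝ} (hf : ContinuousOn f D)
    (hf' : ∀ x ∈ interior D, HasDerivWithinAt f (f' x) (interior D) x)
    (hf'₀ : ∀ x ∈ interior D, f' x ≠ 0) : StrictMonoOn f D ∨ StrictAntiOn f D := by
  rcases hasDerivWithinAt_forall_lt_or_forall_gt_of_forall_ne hD.interior hf' hf'₀
    with hneg | hpos
  · exact Or.inr (strictAntiOn_of_hasDerivWithinAt_neg hD hf hf' hneg)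
  · exact Or.inl (strictMonoOn_of_hasDerivWithinAt_pos hD hf hf' hpos)

theorem eventually_injOn_Icc_and_uIcc_mem_nhds {f f' : ℝ → ℝ} {z : ℝ}
    (hf : ∀ᶠ t in 𝓝 z, HasDerivAt f (f' t) t) (hf' : ContinuousAt f' z) (hz : f' z ≠ 0) :
    ∀ᶠ r in 𝓝[>] 0, InjOn f (Icc (z - r) (z + r)) ∧ uIcc (f (z - r)) (f (z + r)) ∈ 𝓝 (f z) := by
  obtain ⟨ρ, hρ, hball⟩ := eventually_nhds_iff_ball.1 (hf.and (hf'.eventually_ne hz))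
  have hmono : StrictMonoOn f (ball z ρ) ∨ StrictAntiOn f (ball z ρ) := by
    refine strictMonoOn_or_strictAntiOn_of_hasDerivWithinAt_ne_zero (f' := f') (convex_ball z ρ)
      (fun t ht => (hball t ht).1.continuousAt.continuousWithinAt) ?_ ?_ <;>
      rw [isOpen_ball.interior_eq]
    exacts [fun t ht => (hball t ht).1.hasDerivWithinAt, fun t ht => (hball t ht).2]
  filter_upwards [Ioo_mem_nhdsGT hρ] with r ⟨hr0, hrρ⟩
  have hsub : Icc (z - r) (z + r) ⊆ ball z ρ := by
    rw [← Real.closedBall_eq_Icc]; exact closedBall_subset_ball hrρ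
  have hl : z - r ∈ ball z ρ := hsub (left_mem_Icc.2 (by linarith))
  have hr : z + r ∈ ball z ρ := hsub (right_mem_Icc.2 (by linarith))
  have hz : z ∈ ball z ρ := mem_ball_self hρ
  rcases hmono with hmono | hanti
  · refine ⟨hmono.injOn.mono hsub, ?_⟩
    rw [uIcc_of_le ((hmono hl hr (by linarith)).le)]
    exact Icc_mem_nhds (hmono hl hz (by linarith)) (hmono hz hr (by linarith))
  · refine ⟨hanti.injOn.mono hsub, ?_⟩
    rw [uIcc_of_ge ((hanti hl hr (by linarith)).le)]
    exact Icc_mem_nhds (hanti hz hr (by linarith)) (hanti hl hz (by linarith))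

theorem IsCompact.finite_setOf_eq {X Y : Type*} [TopologicalSpace X] [T2Space X]
    [TopologicalSpace Y] [T1Space Y] {K : Set X} {f : X → Y} {y : Y} (hK : IsCompact K)
    (hf : ContinuousOn f K) (hiso : ∀ z ∈ K, f z = y → ∀ᶠ t in 𝓝[≠] z, f t ≠ y) :
    {t ∈ K | f t = y}.Finite := by
  have hclosed : IsClosed {t ∈ K | f t = y} :=
    hf.preimage_isClosed_of_isClosed hK.isClosed isClosed_singleton
  refine (hK.of_isClosed_subset hclosed fun t ht => ht.1).finite ?_
  refine isDiscrete_iff_nhdsNE.2 fun z hz => inf_principal_eq_bot.2 ?_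
  filter_upwards [hiso z hz.1 hz.2] with t ht using fun h => ht h.2

theorem Set.Finite.eventually_pairwiseDisjoint_closedBall {X : Type*} [MetricSpace X]
    {s : Set X} (hs : s.Finite) : ∀ᶠ r in 𝓝 0, s.PairwiseDisjoint (closedBall · r) := by
  have : ∀ᶠ r in 𝓝 0, ∀ x ∈ s, ∀ y ∈ s, x ≠ y →
      Disjoint (closedBall x r) (closedBall y r) := by
    refine (eventually_all_finite hs).2 fun x _ => (eventually_all_finite hs).2 fun y _ => ?_
    rcases eq_or_ne x y with rfl | hxy
    · exact Eventually.of_forall fun _ h => (h rfl).elim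
    · filter_upwards [gt_mem_nhds (half_pos (dist_pos.2 hxy))] with r hr _
      exact closedBall_disjoint_closedBall (by linarith)
  filter_upwards [this] with r hr x hx y hy hxy using hr x hx y hy hxy

theorem Set.Finite.exists_pos_radius_injOn_Icc {f f' : ℝ → ℝ} {U Z : Set ℝ} (hZ : Z.Finite)
    (hU : IsOpen U) (hZU : Z ⊆ U) (hf : ∀ t ∈ U, HasDerivAt f (f' t) t)
    (hf' : ∀ z ∈ Z, ContinuousAt f' z) (hf'₀ : ∀ z ∈ Z, f' z ≠ 0) :
    ∃ r > 0, Z.PairwiseDisjoint (fun z => Icc (z - r) (z + r)) ∧ ∀ z ∈ Z,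
      Icc (z - r) (z + r) ⊆ U ∧ InjOn f (Icc (z - r) (z + r)) ∧
      uIcc (f (z - r)) (f (z + r)) ∈ 𝓝 (f z) := by
  have hloc : ∀ z ∈ Z, ∀ᶠ r in 𝓝[>] 0, Icc (z - r) (z + r) ⊆ U ∧
      InjOn f (Icc (z - r) (z + r)) ∧ uIcc (f (z - r)) (f (z + r)) ∈ 𝓝 (f z) := by
    intro z hz
    have hUz : U ∈ 𝓝 z := hU.mem_nhds (hZU hz)
    filter_upwards [(eventually_closedBall_subset hUz).filter_mono nhdsWithin_le_nhds,
      eventually_injOn_Icc_and_uIcc_mem_nhds (eventually_of_mem hUz hf) (hf' z hz) (hf'₀ z hz)]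
      with r hsub hr
    exact ⟨Real.closedBall_eq_Icc ▸ hsub, hr⟩
  obtain ⟨r, hr0, hdisj, hr⟩ := (eventually_mem_nhdsWithin.and
    ((hZ.eventually_pairwiseDisjoint_closedBall.filter_mono nhdsWithin_le_nhds).and
      ((eventually_all_finite hZ).2 hloc))).exists
  refine ⟨r, hr0, ?_, hr⟩
  simpa only [Real.closedBall_eq_Icc] using hdisj

theorem IsCompact.exists_pos_abs_sub_lt_imp_mem {X : Type*} [TopologicalSpace X] {K U : Set X}
    {f : X → ℝ} {y : ℝ} (hK : IsCompact K) (hU : IsOpen U) (hf : ContinuousOn f K)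
    (hzero : ∀ t ∈ K, f t = y → t ∈ U) : ∃ ε > 0, ∀ t ∈ K, |f t - y| < ε → t ∈ U := by
  obtain ⟨ε, hε, hle⟩ := (hK.diff hU).exists_forall_le'
    ((hf.mono sdiff_subset).sub continuousOn_const).abs (a := 0)
    fun t ht => abs_pos.2 (sub_ne_zero.2 fun h => ht.2 (hzero t ht.1 h))
  exact ⟨ε, hε, fun t ht hlt => by_contra fun htU => (hle t ⟨ht, htU⟩).not_gt hlt⟩

theorem setIntegral_mul_indicator_eq_sum {α ι : Type*} [MeasurableSpace α] {μ : Measure α}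
    {g : α → ℝ} {s S : Set α} {B : ι → Set α} {I : Finset ι} (hs : MeasurableSet s)
    (hB : ∀ i ∈ I, MeasurableSet (B i ∩ S)) (hBs : ∀ i ∈ I, B i ⊆ s)
    (hdisj : (I : Set ι).PairwiseDisjoint B) (hcover : s ∩ S ⊆ ⋃ i ∈ I, B i)
    (hg : IntegrableOn g s μ) :
    ∫ t in s, g t * S.indicator (fun _ => (1 : ℝ)) t ∂μ = ∑ i ∈ I, ∫ t in B i ∩ S, g t ∂μ := by
  have heq : EqOn (fun t => g t * S.indicator (fun _ => (1 : ℝ)) t)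
      ((⋃ i ∈ I, B i ∩ S).indicator g) s := by
    intro t ht
    dsimp only
    by_cases htS : t ∈ S
    · obtain ⟨i, hi, htB⟩ := mem_iUnion₂.1 (hcover ⟨ht, htS⟩)
      have htU : t ∈ ⋃ i ∈ I, B i ∩ S := mem_iUnion₂.2 ⟨i, hi, htB, htS⟩
      rw [indicator_of_mem htS, mul_one, indicator_of_mem htU]
    · rw [indicator_of_notMem htS, mul_zero, indicator_of_notMem (by simp [htS])]
  have hsub : (⋃ i ∈ I, B i ∩ S) ⊆ s :=
    iUnion₂_subset fun i hi => inter_subset_left.trans (hBs i hi)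
  rw [setIntegral_congr_fun hs heq, setIntegral_indicator (Finset.measurableSet_biUnion I hB),
    inter_eq_self_of_subset_right hsub,
    integral_biUnion_finset I hB (hdisj.mono fun _ => inter_subset_left)
      fun i hi => hg.mono_set (inter_subset_left.trans (hBs i hi))]

theorem setIntegral_abs_deriv_mul_indicator_eq_ncard {f f' : ℝ → ℝ} {s Z : Set ℝ}
    {x r δ : ℝ} (hZ : Z.Finite) (hs : MeasurableSet s) (hf' : IntegrableOn (fun t => |f' t|) s)
    (hr : 0 ≤ r) (hδ : 0 ≤ δ) (hdisj : Z.PairwiseDisjoint fun z => Icc (z - r) (z + r))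
    (hsub : ∀ z ∈ Z, Icc (z - r) (z + r) ⊆ s)
    (hderiv : ∀ z ∈ Z, ∀ t ∈ Icc (z - r) (z + r),
      HasDerivWithinAt f (f' t) (Icc (z - r) (z + r)) t)
    (hinj : ∀ z ∈ Z, InjOn f (Icc (z - r) (z + r)))
    (hband : ∀ z ∈ Z, closedBall x δ ⊆ uIcc (f (z - r)) (f (z + r)))
    (hcover : ∀ t ∈ s, |f t - x| ≤ δ → ∃ z ∈ Z, t ∈ Icc (z - r) (z + r)) :
    ∫ t in s, |f' t| * {t | |f t - x| ≤ δ}.indicator (fun _ => (1 : ℝ)) t = Z.ncard * (2 * δ) := by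
  have hS : {t | |f t - x| ≤ δ} = f ⁻¹' closedBall x δ := by ext; simp [Real.dist_eq]
  have hmeas : ∀ z ∈ hZ.toFinset,
      MeasurableSet (Icc (z - r) (z + r) ∩ f ⁻¹' closedBall x δ) := fun z hz =>
    ContinuousOn.measurableSet_inter_preimage
      (fun t ht => (hderiv z (hZ.mem_toFinset.1 hz) t ht).continuousWithinAt) measurableSet_Icc
      measurableSet_closedBall
  have hlocal : ∀ z ∈ hZ.toFinset,
      ∫ t in Icc (z - r) (z + r) ∩ f ⁻¹' closedBall x δ, |f' t| = 2 * δ := fun z hz => by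
    rw [hZ.mem_toFinset] at hz
    rw [setIntegral_abs_deriv_inter_preimage (by linarith) (hderiv z hz) (hinj z hz)
      measurableSet_closedBall (hband z hz), Real.volume_real_closedBall hδ]
  rw [hS, setIntegral_mul_indicator_eq_sum hs hmeas
    (fun z hz => hsub z (hZ.mem_toFinset.1 hz)) (by rwa [hZ.coe_toFinset]) ?_ hf',
    Finset.sum_congr rfl hlocal, Finset.sum_const, nsmul_eq_mul, ncard_eq_toFinset_card Z hZ]
  rintro t ⟨ht, htx⟩
  obtain ⟨z, hz, htz⟩ := hcover t ht (mem_closedBall.1 htx)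
  exact mem_iUnion₂.2 ⟨z, hZ.mem_toFinset.2 hz, htz⟩

theorem kac_counting_formula_general
    (H x : ℝ) (f f' : ℝ → ℝ)
    (hderiv : ∀ t ∈ Icc (0:ℝ) H, HasDerivWithinAt f (f' t) (Icc (0:ℝ) H) t)
    (hcont : ContinuousOn f' (Icc (0:ℝ) H))
    (h0 : f 0 ≠ x) (hHx : f H ≠ x)
    (hnd : ∀ t ∈ Icc (0:ℝ) H, f t = x → f' t ≠ 0) :
    {t ∈ Icc (0:ℝ) H | f t = x}.Finite ∧
    Tendsto
      (fun δ : ℝ => (1 / (2 * δ)) *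
        ∫ t in Icc (0:ℝ) H,
          |f' t| * ({s : ℝ | |f s - x| ≤ δ}.indicator (fun _ => (1:ℝ)) t))
      (𝓝[>] (0:ℝ))
      (𝓝 (({t ∈ Icc (0:ℝ) H | f t = x}.ncard : ℝ))) := by
  set Z := {t ∈ Icc (0:ℝ) H | f t = x}
  have hfc : ContinuousOn f (Icc 0 H) := fun t ht => (hderiv t ht).continuousWithinAt
  have hZ : Z ⊆ Ioo 0 H := fun z ⟨⟨hz0, hzH⟩, hzx⟩ =>
    ⟨hz0.lt_of_ne (by rintro rfl; exact h0 hzx), hzH.lt_of_ne (by rintro rfl; exact hHx hzx)⟩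
  have hdiff : ∀ t ∈ Ioo 0 H, HasDerivAt f (f' t) t := fun t ht =>
    (hderiv t (Ioo_subset_Icc_self ht)).hasDerivAt (Icc_mem_nhds ht.1 ht.2)
  have hfin : Z.Finite := isCompact_Icc.finite_setOf_eq hfc fun z hz hzx => by
    simpa only [hzx] using (hdiff z (hZ ⟨hz, hzx⟩)).eventually_ne (hnd z hz hzx)
  refine ⟨hfin, tendsto_const_nhds.congr' ?_⟩
  obtain ⟨r, hr0, hdisj, hr⟩ := hfin.exists_pos_radius_injOn_Icc isOpen_Ioo hZ hdiff
    (fun z hz => hcont.continuousAt (Icc_mem_nhds (hZ hz).1 (hZ hz).2))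
    fun z hz => hnd z hz.1 hz.2
  obtain ⟨ε, hε, hgap⟩ := isCompact_Icc.exists_pos_abs_sub_lt_imp_mem
    (isOpen_biUnion fun z _ => isOpen_Ioo) hfc (U := ⋃ z ∈ Z, Ioo (z - r) (z + r))
    fun t ht htx => mem_iUnion₂.2 ⟨t, ⟨ht, htx⟩, by constructor <;> linarith⟩
  have hband : ∀ᶠ δ in 𝓝[>] 0, ∀ z ∈ Z, closedBall x δ ⊆ uIcc (f (z - r)) (f (z + r)) :=
    (eventually_all_finite hfin).2 fun z hz =>
      (eventually_closedBall_subset (hz.2 ▸ (hr z hz).2.2)).filter_mono nhdsWithin_le_nhds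
  filter_upwards [hband, Ioo_mem_nhdsGT hε] with δ hδ ⟨hδ0, hδε⟩
  rw [setIntegral_abs_deriv_mul_indicator_eq_ncard hfin measurableSet_Icc
    (hcont.abs.integrableOn_compact isCompact_Icc) hr0.le hδ0.le hdisj
    (fun z hz => (hr z hz).1.trans Ioo_subset_Icc_self)
    (fun z hz t ht => (hdiff t ((hr z hz).1 ht)).hasDerivWithinAt)
    (fun z hz => (hr z hz).2.1) hδ]
  · field_simp
  · intro t ht htx
    obtain ⟨z, hz, htz⟩ := mem_iUnion₂.1 (hgap t ht (htx.trans_lt hδε))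
    exact ⟨z, hz, Ioo_subset_Icc_self htz⟩

/-- **Kac's counting formula.** For a C¹ function `f` on `[0,H]` avoiding the level `x`
at the endpoints and with nonvanishing derivative on the level set, the level set is finite
and `(1/(2δ)) ∫₀^H |f'(t)| 1_{|f(t)-x| ≤ δ} dt` tends to its cardinality as `δ → 0⁺`. -/
theorem kac_counting_formula
    (H x : ℝ) (hH : 0 < H) (f f' : ℝ → ℝ)
    (hderiv : ∀ t ∈ Icc (0:ℝ) H, HasDerivWithinAt f (f' t) (Icc (0:ℝ) H) t)
    (hcont : ContinuousOn f' (Icc (0:ℝ) H))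
    (h0 : f 0 ≠ x) (hHx : f H ≠ x)
    (hnd : ∀ t ∈ Icc (0:ℝ) H, f t = x → f' t ≠ 0) :
    {t ∈ Icc (0:ℝ) H | f t = x}.Finite ∧
    Tendsto
      (fun δ : ℝ => (1 / (2 * δ)) *
        ∫ t in Icc (0:ℝ) H,
          |f' t| * ({s : ℝ | |f s - x| ≤ δ}.indicator (fun _ => (1:ℝ)) t))
      (𝓝[>] (0:ℝ))
      (𝓝 (({t ∈ Icc (0:ℝ) H | f t = x}.ncard : ℝ))) :=
  kac_counting_formula_general H x f f' hderiv hcont h0 hHx hnd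
end

section
/- Let a < b, m > 0, x ∈ ℝ and δ > 0, and let g : [a,b] → ℝ be differentiable with |g'(t)| ≥ m for all t ∈ [a,b]. Then the Lebesgue measure of the set {t ∈ [a,b] : |g(t) − x| ≤ δ} is at most 2δ/m. (Occupation-time bound used for the domination argument in the proof of the Dalmao–Mordecki formula.) -/
open MeasureTheory Set

theorem mul_abs_sub_le_abs_sub_of_le_abs_hasDerivWithinAt {D : Set ℝ} (hD : D.OrdConnected)
    {g g' : ℝ → ℝ} {m : ℝ} (hderiv : ∀ t ∈ D, HasDerivWithinAt g (g' t) D t)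
    (hg' : ∀ t ∈ D, m ≤ |g' t|) {s t : ℝ} (hs : s ∈ D) (ht : t ∈ D) :
    m * |s - t| ≤ |g s - g t| := by
  wlog hts : t ≤ s generalizing s t
  · simpa only [abs_sub_comm] using this ht hs (le_of_not_ge hts)
  rcases hts.eq_or_lt with rfl | hts
  · simp
  have hsub : Icc t s ⊆ D := hD.out ht hs
  obtain ⟨c, hc, hslope⟩ := exists_hasDerivAt_eq_slope g g' hts
    (fun c hc => (hderiv c (hsub hc)).continuousWithinAt.mono hsub)
    (fun c hc => (hderiv c (hsub (Ioo_subset_Icc_self hc))).hasDerivAt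
      (Filter.mem_of_superset (Icc_mem_nhds hc.1 hc.2) hsub))
  have hlen : 0 < s - t := sub_pos.2 hts
  calc m * |s - t| ≤ |g' c| * (s - t) := by
        rw [abs_of_pos hlen]
        exact mul_le_mul_of_nonneg_right (hg' c (hsub (Ioo_subset_Icc_self hc))) hlen.le
    _ = |g s - g t| := by
        rw [hslope, abs_div, abs_of_pos hlen, div_mul_cancel₀ _ hlen.ne']

theorem Real.volume_le_ofReal_of_forall_abs_sub_le {S : Set ℝ} {d : ℝ}
    (h : ∀ s ∈ S, ∀ t ∈ S, |s - t| ≤ d) : volume S ≤ ENNReal.ofReal d :=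
  (Real.volume_le_diam S).trans <| Metric.ediam_le_of_forall_dist_le h

theorem occupation_time_bound_general
    (a b m x δ : ℝ) (hm : 0 < m)
    (g g' : ℝ → ℝ)
    (hderiv : ∀ t ∈ Icc a b, HasDerivWithinAt g (g' t) (Icc a b) t)
    (hg' : ∀ t ∈ Icc a b, m ≤ |g' t|) :
    volume {t ∈ Icc a b | |g t - x| ≤ δ} ≤ ENNReal.ofReal (2 * δ / m) := by
  refine Real.volume_le_ofReal_of_forall_abs_sub_le fun s ⟨hs, hsx⟩ t ⟨ht, htx⟩ => ?_
  have hgap : |g s - g t| ≤ 2 * δ :=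
    calc |g s - g t| = |(g s - x) - (g t - x)| := by ring_nf
      _ ≤ |g s - x| + |g t - x| := abs_sub _ _
      _ ≤ 2 * δ := by linarith
  rw [le_div_iff₀ hm, mul_comm]
  exact (mul_abs_sub_le_abs_sub_of_le_abs_hasDerivWithinAt ordConnected_Icc hderiv hg' hs ht).trans
    hgap

/-- **Occupation-time bound.** If `|g'| ≥ m > 0` on `[a,b]`, then the Lebesgue measure of
`{t ∈ [a,b] : |g(t) − x| ≤ δ}` is at most `2δ/m`. -/
theorem occupation_time_bound
    (a b m x δ : ℝ) (hab : a < b) (hm : 0 < m) (hδ : 0 < δ)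
    (g g' : ℝ → ℝ)
    (hderiv : ∀ t ∈ Icc a b, HasDerivWithinAt g (g' t) (Icc a b) t)
    (hg' : ∀ t ∈ Icc a b, m ≤ |g' t|) :
    volume {t ∈ Icc a b | |g t - x| ≤ δ} ≤ ENNReal.ofReal (2 * δ / m) :=
  occupation_time_bound_general a b m x δ hm g g' hderiv hg'
end

section
/- Let H > 0, x ∈ ℝ, let r : ℝ → ℝ be continuously differentiable with r(x) ≠ 0, and let f : [0,H] → ℝ be a piecewise C¹ path with jump times 0 = t₀ < t₁ < ⋯ < t_k < t_{k+1} = H which is a piecewise integral curve of r and avoids the level x at endpoints and jumps. Then the local time l_x(H)(f) = lim_{δ→0⁺} (1/(2δ)) ∫₀^H 1_{|f(t)−x|≤δ} dt exists, the continuous crossing set C_x(f) is finite, and card C_x(f) = |r(x)| · l_x(H)(f). (Pathwise form of the local time–crossing relation, Theorem 2.) -/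
/-!
Between two jumps `f` follows an integral curve `gᵢ` of `r`, and since `gᵢ` avoids `x` at the
ends of its interval, every crossing of `x` by `gᵢ` is interior and happens with velocity
`r x ≠ 0`. So the crossings are isolated, hence finite in number, and they are exactly the
continuous crossings of `f`. Near a crossing `s` one has `|gᵢ t - x| ≈ |r x| |t - s|`, while
away from the crossings `|gᵢ - x|` is bounded below by compactness; hence for small `δ` the set
`{|gᵢ - x| ≤ δ}` is squeezed between disjoint intervals of length `2δ / (|r x| ± ε)` around the
crossings, and `(1 / 2δ) |{|f - x| ≤ δ}| → card C_x(f) / |r x|`.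
-/

open MeasureTheory Filter Set Topology

/-- The continuous crossing set of the level `x` by `f` on `(0,H)`. -/
def crossSet (H x : ℝ) (f : ℝ → ℝ) : Set ℝ :=
  {s : ℝ | s ∈ Set.Ioo 0 H ∧ ContinuousAt f s ∧ f s = x}

open Metric

theorem tendsto_of_eventually_eventually_mem_Icc {ι α β : Type*} [Preorder β]
    [TopologicalSpace β] [OrderTopology β] {l' : Filter ι} [l'.NeBot] {l : Filter α}
    {F : α → β} {lo hi : ι → β} {L : β} (hlo : Tendsto lo l' (𝓝 L)) (hhi : Tendsto hi l' (𝓝 L))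
    (h : ∀ᶠ ε in l', ∀ᶠ a in l, F a ∈ Icc (lo ε) (hi ε)) : Tendsto F l (𝓝 L) := by
  refine tendsto_order.2 ⟨fun b hb => ?_, fun b hb => ?_⟩
  · obtain ⟨ε, hε, hbε⟩ := (h.and (hlo.eventually (lt_mem_nhds hb))).exists
    exact hε.mono fun a ha => hbε.trans_le ha.1
  · obtain ⟨ε, hε, hbε⟩ := (h.and (hhi.eventually (gt_mem_nhds hb))).exists
    exact hε.mono fun a ha => ha.2.trans_lt hbε

theorem Finset.eventually_pairwiseDisjoint_closedBall {X : Type*} [MetricSpace X]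
    (Z : Finset X) :
    ∀ᶠ η in 𝓝 (0 : ℝ), (Z : Set X).PairwiseDisjoint fun s => closedBall s η := by
  have key : ∀ s ∈ Z, ∀ s' ∈ Z, ∀ᶠ η in 𝓝 (0 : ℝ),
      s ≠ s' → Disjoint (closedBall s η) (closedBall s' η) := by
    intro s _ s' _
    by_cases hss' : s = s'
    · exact Eventually.of_forall fun _ hne => absurd hss' hne
    · filter_upwards [Iio_mem_nhds (half_pos (dist_pos.2 hss'))] with η hη _
      exact closedBall_disjoint_closedBall (by linarith [show η < dist s s' / 2 from hη])
  filter_upwards [(Z.eventually_all).2 fun s hs => (Z.eventually_all).2 (key s hs)]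
    with η hη s hs s' hs' hne using hη s hs s' hs' hne

theorem HasDerivAt.eventually_abs_sub_bounds {g : ℝ → ℝ} {c s ε : ℝ} (hd : HasDerivAt g c s)
    (hε : 0 < ε) :
    ∀ᶠ t in 𝓝 s, (|c| - ε) * |t - s| ≤ |g t - g s| ∧ |g t - g s| ≤ (|c| + ε) * |t - s| := by
  filter_upwards [(hasDerivAt_iff_isLittleO.1 hd).def hε] with t ht
  rw [Real.norm_eq_abs, Real.norm_eq_abs, smul_eq_mul] at ht
  have hlin : |(t - s) * c| = |c| * |t - s| := by rw [abs_mul, mul_comm]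
  have h₁ := abs_sub_abs_le_abs_sub (g t - g s) ((t - s) * c)
  have h₂ := abs_sub_abs_le_abs_sub ((t - s) * c) (g t - g s)
  rw [abs_sub_comm ((t - s) * c)] at h₂
  constructor <;> linarith

section SinglePiece

variable {g : ℝ → ℝ} {a b c x : ℝ}

theorem finite_setOf_mem_Icc_eq (hc : c ≠ 0) (hg : ContinuousOn g (Icc a b))
    (hd : ∀ s ∈ Icc a b, g s = x → HasDerivAt g c s) : {s ∈ Icc a b | g s = x}.Finite := by
  have hclosed : IsClosed {s ∈ Icc a b | g s = x} :=
    hg.preimage_isClosed_of_isClosed isClosed_Icc isClosed_singleton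
  refine (isCompact_Icc.of_isClosed_subset hclosed fun s hs => hs.1).finite
    (isDiscrete_iff_nhdsNE.2 fun s hs => ?_)
  rw [← disjoint_iff, disjoint_principal_right]
  filter_upwards [(hd s hs.1 hs.2).eventually_ne (c := x) hc] with t ht ⟨_, htx⟩ using ht htx

theorem exists_closedBall_abs_sub_bounds
    (hz : ∀ s ∈ Icc a b, g s = x → s ∈ Ioo a b ∧ HasDerivAt g c s) {ε : ℝ} (hε : 0 < ε)
    (Z : Finset ℝ) (hZ : ∀ s ∈ Z, s ∈ Icc a b ∧ g s = x) :
    ∃ η > 0, (∀ s ∈ Z, closedBall s η ⊆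
      {t ∈ Icc a b | (|c| - ε) * |t - s| ≤ |g t - x| ∧ |g t - x| ≤ (|c| + ε) * |t - s|}) ∧
      (Z : Set ℝ).PairwiseDisjoint fun s => closedBall s η := by
  have hnear : ∀ s ∈ Z, ∀ᶠ η in 𝓝 (0 : ℝ), closedBall s η ⊆
      {t ∈ Icc a b | (|c| - ε) * |t - s| ≤ |g t - x| ∧ |g t - x| ≤ (|c| + ε) * |t - s|} := by
    intro s hs
    obtain ⟨hsab, hd⟩ := hz s (hZ s hs).1 (hZ s hs).2
    refine eventually_closedBall_subset (inter_mem (Icc_mem_nhds hsab.1 hsab.2) ?_)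
    have hbounds := hd.eventually_abs_sub_bounds hε
    rwa [(hZ s hs).2] at hbounds
  obtain ⟨η, ⟨hηnear, hηdisj⟩, hη : 0 < η⟩ := ((((Z.eventually_all).2 hnear).and
    Z.eventually_pairwiseDisjoint_closedBall).filter_mono (nhdsWithin_le_nhds (s := Ioi 0))
    |>.and self_mem_nhdsWithin).exists
  exact ⟨η, hη, hηnear, hηdisj⟩

theorem exists_pos_le_abs_sub_of_notMem_balls (hg : ContinuousOn g (Icc a b)) {Z : Finset ℝ}
    (hZ : ∀ s ∈ Icc a b, g s = x → s ∈ Z) {η : ℝ} (hη : 0 < η) :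
    ∃ m > 0, ∀ t ∈ Icc a b \ ⋃ s ∈ Z, ball s η, m ≤ |g t - x| :=
  (isCompact_Icc.diff (isOpen_biUnion fun _ _ => isOpen_ball)).exists_forall_le'
    ((hg.mono sdiff_subset).sub continuousOn_const).abs fun t ht =>
      abs_pos.2 (sub_ne_zero.2 fun htx => ht.2 (mem_biUnion (hZ t ht.1 htx) (mem_ball_self hη)))

variable (hc : c ≠ 0) (hg : ContinuousOn g (Icc a b))
  (hz : ∀ s ∈ Icc a b, g s = x → s ∈ Ioo a b ∧ HasDerivAt g c s)
include hc hg hz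

theorem eventually_measureReal_sublevel_mem_Icc {ε : ℝ} (hε : 0 < ε) (hεc : ε < |c|) :
    ∀ᶠ δ in 𝓝[>] 0, volume.real {s ∈ Icc a b | |g s - x| ≤ δ} ∈
      Icc ({s ∈ Icc a b | g s = x}.ncard * (2 * (δ / (|c| + ε))))
        ({s ∈ Icc a b | g s = x}.ncard * (2 * (δ / (|c| - ε)))) := by
  have hfin := finite_setOf_mem_Icc_eq hc hg fun s hs hgs => (hz s hs hgs).2
  set Z := hfin.toFinset
  have hZ : ∀ {s}, s ∈ Z ↔ s ∈ Icc a b ∧ g s = x := hfin.mem_toFinset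
  have hN : ({s ∈ Icc a b | g s = x}.ncard : ℝ) = Z.card := by
    rw [ncard_eq_toFinset_card _ hfin]
  obtain ⟨η, hη, hηnear, hηdisj⟩ :=
    exists_closedBall_abs_sub_bounds hz hε Z fun s hs => hZ.1 hs
  obtain ⟨m, hm, hmK⟩ :=
    exists_pos_le_abs_sub_of_notMem_balls hg (fun s hs hgs => hZ.2 ⟨hs, hgs⟩) hη
  have hcε : 0 < |c| - ε := sub_pos.2 hεc
  filter_upwards [Ioo_mem_nhdsGT (lt_min hm (mul_pos hη hcε))] with δ ⟨hδ, hδm⟩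
  have hδm' : δ < m := hδm.trans_le (min_le_left _ _)
  have hδη : δ < η * (|c| - ε) := hδm.trans_le (min_le_right _ _)
  rw [hN]
  constructor
  · have hρη : δ / (|c| + ε) ≤ η := by
      rw [div_le_iff₀ (by positivity)]; nlinarith
    have hsub : ⋃ s ∈ Z, closedBall s (δ / (|c| + ε)) ⊆ {s ∈ Icc a b | |g s - x| ≤ δ} := by
      refine iUnion₂_subset fun s hs t ht => ?_
      obtain ⟨htab, -, hup⟩ := hηnear s hs (closedBall_subset_closedBall hρη ht)
      rw [mem_closedBall, Real.dist_eq, le_div_iff₀ (by positivity)] at ht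
      exact ⟨htab, by nlinarith⟩
    calc (Z.card : ℝ) * (2 * (δ / (|c| + ε)))
        = ∑ s ∈ Z, volume.real (closedBall s (δ / (|c| + ε))) := by
          simp [Real.volume_real_closedBall (by positivity : 0 ≤ δ / (|c| + ε))]
      _ = volume.real (⋃ s ∈ Z, closedBall s (δ / (|c| + ε))) :=
          (measureReal_biUnion_finset (hηdisj.mono fun s => closedBall_subset_closedBall hρη)
            (fun _ _ => measurableSet_closedBall) fun _ _ => measure_closedBall_lt_top.ne).symm
      _ ≤ _ := measureReal_mono hsub
            (measure_ne_top_of_subset (fun t ht => ht.1) (by simp))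
  · have hsub : {s ∈ Icc a b | |g s - x| ≤ δ} ⊆ ⋃ s ∈ Z, closedBall s (δ / (|c| - ε)) := by
      intro t ⟨htab, htδ⟩
      have htU : t ∈ ⋃ s ∈ Z, ball s η := by
        by_contra htU
        exact (hmK t ⟨htab, htU⟩).not_gt (htδ.trans_lt hδm')
      obtain ⟨s, hs, hts⟩ := mem_iUnion₂.1 htU
      have hlow := (hηnear s hs (ball_subset_closedBall hts)).2.1
      refine mem_biUnion hs ?_
      rw [mem_closedBall, Real.dist_eq, le_div_iff₀ hcε]
      nlinarith
    calc volume.real {s ∈ Icc a b | |g s - x| ≤ δ}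
        ≤ volume.real (⋃ s ∈ Z, closedBall s (δ / (|c| - ε))) := measureReal_mono hsub
            (measure_biUnion_lt_top Z.finite_toSet fun _ _ => measure_closedBall_lt_top).ne
      _ ≤ ∑ s ∈ Z, volume.real (closedBall s (δ / (|c| - ε))) :=
          measureReal_biUnion_finset_le _ _
      _ = Z.card * (2 * (δ / (|c| - ε))) := by
          simp [Real.volume_real_closedBall (by positivity : 0 ≤ δ / (|c| - ε))]

theorem tendsto_measureReal_sublevel_div :
    Tendsto (fun δ => 1 / (2 * δ) * volume.real {s ∈ Icc a b | |g s - x| ≤ δ}) (𝓝[>] 0)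
      (𝓝 ({s ∈ Icc a b | g s = x}.ncard / |c|)) := by
  set N : ℝ := ({s ∈ Icc a b | g s = x}.ncard : ℝ)
  have hc' : 0 < |c| := abs_pos.2 hc
  have hlim : ∀ σ : ℝ, Tendsto (fun ε => N / (|c| + σ * ε)) (𝓝[>] 0) (𝓝 (N / |c|)) := fun σ => by
    have : ContinuousAt (fun ε => N / (|c| + σ * ε)) 0 :=
      continuousAt_const.div (by fun_prop) (by simpa using hc'.ne')
    simpa using this.tendsto.mono_left nhdsWithin_le_nhds
  refine tendsto_of_eventually_eventually_mem_Icc (by simpa using hlim 1)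
    (by simpa using hlim (-1)) ?_
  filter_upwards [Ioo_mem_nhdsGT hc'] with ε ⟨hε, hεc⟩
  filter_upwards [eventually_measureReal_sublevel_mem_Icc hc hg hz hε hεc, self_mem_nhdsWithin]
    with δ ⟨hlow, hup⟩ (hδ : 0 < δ)
  have hcε : 0 < |c| - ε := sub_pos.2 hεc
  constructor
  · calc N / (|c| + ε) = 1 / (2 * δ) * (N * (2 * (δ / (|c| + ε)))) := by field_simp
      _ ≤ _ := by gcongr
  · calc _ ≤ 1 / (2 * δ) * (N * (2 * (δ / (|c| - ε)))) := by gcongr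
      _ = N / (|c| - ε) := by field_simp

end SinglePiece

theorem mem_Ioo_and_hasDerivAt_of_eq {g r : ℝ → ℝ} {a b x s : ℝ}
    (hderiv : ∀ s ∈ Icc a b, HasDerivWithinAt g (r (g s)) (Icc a b) s) (ha : g a ≠ x)
    (hb : g b ≠ x) (hs : s ∈ Icc a b) (hgs : g s = x) : s ∈ Ioo a b ∧ HasDerivAt g (r x) s := by
  have hs' : s ∈ Ioo a b :=
    ⟨hs.1.lt_of_ne (by rintro rfl; exact ha hgs), hs.2.lt_of_ne (by rintro rfl; exact hb hgs)⟩
  refine ⟨hs', ?_⟩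
  rw [← hgs]
  exact (hderiv s hs).hasDerivAt (Icc_mem_nhds hs'.1 hs'.2)

section JumpTimes

variable {τ : ℕ → ℝ}

theorem pairwiseDisjoint_Ico_of_monotoneOn {n : ℕ} (hτ : MonotoneOn τ (Iic n)) :
    (Finset.range n : Set ℕ).PairwiseDisjoint fun i => Ico (τ i) (τ (i + 1)) := by
  intro i hi j hj hij
  simp only [Finset.coe_range, mem_Iio] at hi hj
  wlog hlt : i < j generalizing i j
  · exact (this hij.symm hj hi (by omega)).symm
  have hτij : τ (i + 1) ≤ τ j := hτ (by simp; omega) (by simp; omega) (by omega)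
  exact Set.disjoint_left.2 fun t hti htj => (hti.2.trans_le hτij).not_ge htj.1

theorem biUnion_Ico_eq_Ico_of_monotoneOn {n : ℕ} (hτ : MonotoneOn τ (Iic n)) :
    ⋃ i ∈ Finset.range n, Ico (τ i) (τ (i + 1)) = Ico (τ 0) (τ n) := by
  refine (iUnion₂_subset fun i hi => ?_).antisymm (Ico_subset_biUnion_Ico n τ)
  rw [Finset.mem_range] at hi
  exact Ico_subset_Ico (hτ (by simp) (by simp; omega) (Nat.zero_le i))
    (hτ (by simp; omega) (by simp) (by omega))

variable {k : ℕ} {g : ℕ → ℝ → ℝ} {f : ℝ → ℝ}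

theorem crossSet_eq_biUnion {H x : ℝ} (hτ : MonotoneOn τ (Iic (k + 1))) (hτ0 : τ 0 = 0)
    (hτH : τ (k + 1) = H) (hg : ∀ i ≤ k, ContinuousOn (g i) (Icc (τ i) (τ (i + 1))))
    (hfg : ∀ i ≤ k, ∀ s ∈ Ico (τ i) (τ (i + 1)), f s = g i s)
    (hinterior : ∀ i ≤ k, ∀ s ∈ Icc (τ i) (τ (i + 1)), g i s = x → s ∈ Ioo (τ i) (τ (i + 1))) :
    crossSet H x f = ⋃ i ∈ Finset.range (k + 1), {s ∈ Icc (τ i) (τ (i + 1)) | g i s = x} := by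
  ext s
  constructor
  · rintro ⟨hs, -, hfs⟩
    have hsU : s ∈ ⋃ i ∈ Finset.range (k + 1), Ico (τ i) (τ (i + 1)) := by
      rw [biUnion_Ico_eq_Ico_of_monotoneOn hτ, hτ0, hτH]
      exact Ioo_subset_Ico_self hs
    obtain ⟨i, hi, hsi⟩ := mem_iUnion₂.1 hsU
    have hik : i ≤ k := Finset.mem_range_succ_iff.1 hi
    exact mem_biUnion hi ⟨Ico_subset_Icc_self hsi, (hfg i hik s hsi).symm.trans hfs⟩
  · intro hs
    obtain ⟨i, hi, hsi, hgs⟩ := mem_iUnion₂.1 hs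
    have hik : i ≤ k := Finset.mem_range_succ_iff.1 hi
    have hsi' := hinterior i hik s hsi hgs
    have hev : f =ᶠ[𝓝 s] g i := eventually_of_mem (Ioo_mem_nhds hsi'.1 hsi'.2)
      fun t ht => hfg i hik t (Ioo_subset_Ico_self ht)
    refine ⟨?_, ((hg i hik).continuousAt (Icc_mem_nhds hsi'.1 hsi'.2)).congr hev.symm,
      hev.eq_of_nhds.trans hgs⟩
    rw [← hτ0, ← hτH]
    exact ⟨(hτ (by simp) (by simp; omega) (Nat.zero_le i)).trans_lt hsi'.1,
      hsi'.2.trans_le (hτ (by simp; omega) (by simp) (by omega))⟩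

theorem setIntegral_indicator_eq_sum_measureReal (hτ : MonotoneOn τ (Iic (k + 1)))
    (P : ℝ → Prop) (hfg : ∀ i ≤ k, ∀ s ∈ Ico (τ i) (τ (i + 1)), f s = g i s)
    (hP : ∀ i ≤ k, MeasurableSet {s ∈ Icc (τ i) (τ (i + 1)) | P (g i s)}) :
    ∫ s in Icc (τ 0) (τ (k + 1)), {u | P (f u)}.indicator (fun _ => (1 : ℝ)) s =
      ∑ i ∈ Finset.range (k + 1), volume.real {s ∈ Icc (τ i) (τ (i + 1)) | P (g i s)} := by
  set C := fun i => {s ∈ Icc (τ i) (τ (i + 1)) | P (g i s)}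
  have hEq : ∀ i ≤ k, EqOn ({u | P (f u)}.indicator fun _ => (1 : ℝ))
      ((C i).indicator fun _ => 1) (Ico (τ i) (τ (i + 1))) := by
    intro i hi s hs
    refine indicator_const_eq_indicator_const ?_
    simp only [C, mem_ofPred_eq, hfg i hi s hs, Ico_subset_Icc_self hs, true_and]
  calc ∫ s in Icc (τ 0) (τ (k + 1)), {u | P (f u)}.indicator (fun _ => (1 : ℝ)) s
      = ∫ s in ⋃ i ∈ Finset.range (k + 1), Ico (τ i) (τ (i + 1)),
          {u | P (f u)}.indicator (fun _ => (1 : ℝ)) s := by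
        rw [biUnion_Ico_eq_Ico_of_monotoneOn hτ]
        exact setIntegral_congr_set Ico_ae_eq_Icc.symm
    _ = ∑ i ∈ Finset.range (k + 1), ∫ s in Ico (τ i) (τ (i + 1)),
          {u | P (f u)}.indicator (fun _ => (1 : ℝ)) s := by
        refine integral_biUnion_finset _ (fun _ _ => measurableSet_Ico)
          (pairwiseDisjoint_Ico_of_monotoneOn hτ) fun i hi => ?_
        replace hi := Finset.mem_range_succ_iff.1 hi
        exact ((integrableOn_const (by simp)).indicator (hP i hi)).congr_fun (hEq i hi).symm
          measurableSet_Ico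
    _ = ∑ i ∈ Finset.range (k + 1), volume.real (C i) := Finset.sum_congr rfl fun i hi => by
        replace hi := Finset.mem_range_succ_iff.1 hi
        rw [setIntegral_congr_fun measurableSet_Ico (hEq i hi),
          setIntegral_congr_set Ico_ae_eq_Icc, integral_indicator_const _ (hP i hi), smul_eq_mul,
          mul_one, measureReal_restrict_apply (hP i hi), inter_eq_left.2 fun s hs => hs.1]

end JumpTimes

theorem local_time_crossing_relation_pathwise_general
    (H x : ℝ)
    (r : ℝ → ℝ) (hrx : r x ≠ 0)
    (k : ℕ) (τ : ℕ → ℝ) (g : ℕ → ℝ → ℝ) (f : ℝ → ℝ)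
    (hτ0 : τ 0 = 0) (hτH : τ (k+1) = H)
    (hτmono : ∀ i ≤ k, τ i < τ (i+1))
    (hderiv : ∀ i ≤ k, ∀ s ∈ Icc (τ i) (τ (i+1)),
      HasDerivWithinAt (g i) (r (g i s)) (Icc (τ i) (τ (i+1))) s)
    (hfg : ∀ i ≤ k, ∀ s ∈ Ico (τ i) (τ (i+1)), f s = g i s)
    (havoid : ∀ i ≤ k, g i (τ i) ≠ x ∧ g i (τ (i+1)) ≠ x) :
    (crossSet H x f).Finite ∧
    ∃ l : ℝ,
      Tendsto
        (fun δ : ℝ => (1 / (2 * δ)) *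
          ∫ s in Icc (0:ℝ) H, ({u : ℝ | |f u - x| ≤ δ}.indicator (fun _ => (1:ℝ)) s))
        (𝓝[>] (0:ℝ)) (𝓝 l) ∧
      ((crossSet H x f).ncard : ℝ) = |r x| * l := by
  have hτ : MonotoneOn τ (Iic (k + 1)) :=
    (strictMonoOn_Iic_of_lt_succ fun m hm => by simpa using hτmono m (by omega)).monotoneOn
  have hg : ∀ i ≤ k, ContinuousOn (g i) (Icc (τ i) (τ (i + 1))) :=
    fun i hi s hs => (hderiv i hi s hs).continuousWithinAt
  have hz : ∀ i ≤ k, ∀ s ∈ Icc (τ i) (τ (i + 1)), g i s = x →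
      s ∈ Ioo (τ i) (τ (i + 1)) ∧ HasDerivAt (g i) (r x) s := fun i hi _ =>
    mem_Ioo_and_hasDerivAt_of_eq (hderiv i hi) (havoid i hi).1 (havoid i hi).2
  have hfin : ∀ i ∈ Finset.range (k + 1), {s ∈ Icc (τ i) (τ (i + 1)) | g i s = x}.Finite :=
    fun i hi => finite_setOf_mem_Icc_eq hrx (hg i (Finset.mem_range_succ_iff.1 hi))
      fun s hs hgs => (hz i (Finset.mem_range_succ_iff.1 hi) s hs hgs).2
  have hcross := crossSet_eq_biUnion hτ hτ0 hτH hg hfg fun i hi s hs hgs => (hz i hi s hs hgs).1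
  have hdisj : (Finset.range (k + 1) : Set ℕ).PairwiseDisjoint
      fun i => {s ∈ Icc (τ i) (τ (i + 1)) | g i s = x} :=
    (pairwiseDisjoint_Ico_of_monotoneOn hτ).mono_on fun i hi s hs =>
      Ioo_subset_Ico_self (hz i (Finset.mem_range_succ_iff.1 hi) s hs.1 hs.2).1
  have hintegral := fun δ : ℝ => setIntegral_indicator_eq_sum_measureReal hτ (|· - x| ≤ δ) hfg
    fun i hi => (((hg i hi).sub continuousOn_const).abs.preimage_isClosed_of_isClosed
      isClosed_Icc isClosed_Iic).measurableSet
  rw [hτ0, hτH] at hintegral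
  refine ⟨hcross ▸ (Finset.range (k + 1)).finite_toSet.biUnion hfin,
    ∑ i ∈ Finset.range (k + 1), ({s ∈ Icc (τ i) (τ (i + 1)) | g i s = x}.ncard : ℝ) / |r x|,
    ?_, ?_⟩
  · simp_rw [hintegral, Finset.mul_sum]
    refine tendsto_finsetSum _ fun i hi => ?_
    replace hi := Finset.mem_range_succ_iff.1 hi
    exact tendsto_measureReal_sublevel_div hrx (hg i hi) (hz i hi)
  · rw [hcross, ← Finset.set_biUnion_coe,
      (Finset.range (k + 1)).finite_toSet.ncard_biUnion hfin hdisj, finsum_mem_coe_finset,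
      Nat.cast_sum, Finset.mul_sum]
    exact Finset.sum_congr rfl fun i _ => (mul_div_cancel₀ _ (abs_ne_zero.2 hrx)).symm

/-- **Pathwise local time–crossing relation (Theorem 2, pathwise form).**
For a piecewise integral curve `f` of a C¹ vector field `r` with `r x ≠ 0`, avoiding the
level `x` at endpoints and jumps, the local time at `x` exists, the continuous crossing set
is finite, and `card C_x(f) = |r(x)| ⬝ l_x(H)(f)`. -/
theorem local_time_crossing_relation_pathwise
    (H x : ℝ) (hH : 0 < H)
    (r : ℝ → ℝ) (hr : ContDiff ℝ 1 r) (hrx : r x ≠ 0)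
    (k : ℕ) (τ : ℕ → ℝ) (g : ℕ → ℝ → ℝ) (f : ℝ → ℝ)
    (hτ0 : τ 0 = 0) (hτH : τ (k+1) = H)
    (hτmono : ∀ i ≤ k, τ i < τ (i+1))
    (hderiv : ∀ i ≤ k, ∀ s ∈ Icc (τ i) (τ (i+1)),
      HasDerivWithinAt (g i) (r (g i s)) (Icc (τ i) (τ (i+1))) s)
    (hfg : ∀ i ≤ k, ∀ s ∈ Ico (τ i) (τ (i+1)), f s = g i s)
    (hfH : f H = g k H)
    (havoid : ∀ i ≤ k, g i (τ i) ≠ x ∧ g i (τ (i+1)) ≠ x) :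
    (crossSet H x f).Finite ∧
    ∃ l : ℝ,
      Tendsto
        (fun δ : ℝ => (1 / (2 * δ)) *
          ∫ s in Icc (0:ℝ) H, ({u : ℝ | |f u - x| ≤ δ}.indicator (fun _ => (1:ℝ)) s))
        (𝓝[>] (0:ℝ)) (𝓝 l) ∧
      ((crossSet H x f).ncard : ℝ) = |r x| * l :=
  local_time_crossing_relation_pathwise_general H x r hrx k τ g f hτ0 hτH hτmono hderiv hfg havoid
end

section
/- Let (Ω,𝔉,P) be a probability space, H > 0, x ∈ ℝ, and r : ℝ → ℝ continuously differentiable with r(x) ≠ 0. Let X : Ω × [0,H] → ℝ be such that for P-almost every ω, the path t ↦ X(ω,t) is a piecewise C¹ path (with some finite set of jump times depending on ω) which is a piecewise integral curve of r and avoids the level x at endpoints and jumps. Then, almost surely, the local time l_x(H) = lim_{δ→0⁺} (1/(2δ)) ∫₀^H 1_{|X(t)−x|≤δ} dt exists and the number c_x(H) of continuous crossings of the level x by X on [0,H] satisfies c_x(H) = |r(x)| · l_x(H). (Local time–crossing relation, Theorem 2.) -/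
/-!
Near a zero `z` of `g - x` with `g'(z) ≠ 0`, the linearization `|g s - x| ≈ |g'(z)| |s - z|`
squeezes the set `{|g - x| ≤ δ}` between intervals of radius `δ / (|g'(z)| ± η)` around `z`, so
`z` contributes exactly `1 / |g'(z)|` to the normalized occupation time. On each smooth piece of an
integral curve of `r` the derivative at a level-`x` point is `r x ≠ 0`, so these points are
isolated, avoid the endpoints, and are finitely many; away from them `|g - x|` is bounded below
by compactness. Summing over zeros and pieces gives `l_x(H) = c_x(H) / |r x|`.
-/

open MeasureTheory Filter Set Topology

open Metric

theorem tendsto_of_forall_eventually_between {ι κ α : Type*} [TopologicalSpace α] [LinearOrder α]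
    [OrderTopology α] {l : Filter ι} {p : Filter κ} [p.NeBot] {u : ι → α} {φ ψ : κ → α} {m : α}
    (hφ : Tendsto φ p (𝓝 m)) (hψ : Tendsto ψ p (𝓝 m))
    (h : ∀ᶠ η in p, ∀ᶠ δ in l, φ η ≤ u δ ∧ u δ ≤ ψ η) : Tendsto u l (𝓝 m) := by
  refine tendsto_order.2 ⟨fun a ha => ?_, fun b hb => ?_⟩
  · obtain ⟨η, hη, haη⟩ := (h.and (hφ.eventually (lt_mem_nhds ha))).exists
    exact hη.mono fun δ hδ => haη.trans_le hδ.1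
  · obtain ⟨η, hη, hηb⟩ := (h.and (hψ.eventually (gt_mem_nhds hb))).exists
    exact hη.mono fun δ hδ => hδ.2.trans_lt hηb

theorem eventually_nhdsGT_lt {M : ℝ} (hM : 0 < M) : ∀ᶠ δ in 𝓝[>] (0 : ℝ), δ < M :=
  (eventually_lt_nhds hM).filter_mono nhdsWithin_le_nhds

theorem HasDerivAt.exists_abs_sub_mem_Icc {g : ℝ → ℝ} {c z η : ℝ} (hg : HasDerivAt g c z)
    (hη : 0 < η) :
    ∃ ρ > 0, ∀ s ∈ ball z ρ, |g s - g z| ∈ Icc ((|c| - η) * |s - z|) ((|c| + η) * |s - z|) := by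
  refine Metric.eventually_nhds_iff_ball.1 ?_
  filter_upwards [hg.isLittleO.bound hη] with s hs
  have h : |(|g s - g z| - |c| * |s - z|)| ≤ η * |s - z| :=
    calc |(|g s - g z| - |c| * |s - z|)| = |(|g s - g z| - |(s - z) * c|)| := by
          rw [abs_mul, mul_comm]
      _ ≤ |g s - g z - (s - z) * c| := abs_abs_sub_abs_le_abs_sub _ _
      _ ≤ η * |s - z| := by simpa [Real.norm_eq_abs] using hs
  exact ⟨by linarith [abs_le.1 h], by linarith [abs_le.1 h]⟩

theorem sublevel_inter_ball_subset_closedBall {g : ℝ → ℝ} {z K η ρ δ : ℝ}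
    (hlin : ∀ s ∈ ball z ρ, (K - η) * |s - z| ≤ |g s - g z|) (hηK : η < K) :
    {s | |g s - g z| ≤ δ} ∩ ball z ρ ⊆ closedBall z (δ / (K - η)) := by
  rintro s ⟨hsδ : |g s - g z| ≤ δ, hs⟩
  rw [mem_closedBall, Real.dist_eq, le_div_iff₀ (by linarith), mul_comm]
  exact (hlin s hs).trans hsδ

theorem closedBall_subset_sublevel_inter_ball {g : ℝ → ℝ} {z K η ρ δ w : ℝ}
    (hlin : ∀ s ∈ ball z ρ, |g s - g z| ≤ (K + η) * |s - z|) (hKη : 0 ≤ K + η) (hwρ : w < ρ)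
    (hwδ : (K + η) * w ≤ δ) : closedBall z w ⊆ {s | |g s - g z| ≤ δ} ∩ ball z ρ := by
  intro s hs
  rw [mem_closedBall, Real.dist_eq] at hs
  have hsρ : s ∈ ball z ρ := by rw [mem_ball, Real.dist_eq]; linarith
  exact ⟨(hlin s hsρ).trans ((mul_le_mul_of_nonneg_left hs hKη).trans hwδ), hsρ⟩

theorem HasDerivAt.tendsto_occupation_ball {g : ℝ → ℝ} {c z : ℝ} (hg : HasDerivAt g c z)
    (hc : c ≠ 0) :
    ∀ᶠ ε in 𝓝[>] 0, Tendsto (fun δ => (2 * δ)⁻¹ * volume.real ({s | |g s - g z| ≤ δ} ∩ ball z ε))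
      (𝓝[>] 0) (𝓝 |c|⁻¹) := by
  set K := |c|
  have hK : 0 < K := abs_pos.2 hc
  obtain ⟨ρ₀, hρ₀, hρ₀g⟩ := hg.exists_abs_sub_mem_Icc (half_pos hK)
  filter_upwards [Ioc_mem_nhdsGT hρ₀] with ε ⟨hε, hερ₀⟩
  have hlim : ∀ σ : ℝ, Tendsto (fun η => (K + σ * η)⁻¹) (𝓝[>] 0) (𝓝 K⁻¹) := fun σ => by
    have : ContinuousAt (fun η => (K + σ * η)⁻¹) 0 := by fun_prop (disch := simpa using hK.ne')
    simpa using this.tendsto.mono_left nhdsWithin_le_nhds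
  refine tendsto_of_forall_eventually_between (hlim 1) (hlim (-1)) ?_
  filter_upwards [Ioo_mem_nhdsGT hK] with η ⟨hη, hηK⟩
  obtain ⟨ρ, hρ, hρg⟩ := hg.exists_abs_sub_mem_Icc hη
  filter_upwards [self_mem_nhdsWithin,
    eventually_nhdsGT_lt (mul_pos (add_pos hK hη) (lt_min hε hρ)), eventually_nhdsGT_lt (half_pos (mul_pos hK hρ))] with δ (hδ : 0 < δ) hδε hδρ
  set S := {s | |g s - g z| ≤ δ} ∩ ball z ε
  simp only [one_mul, neg_one_mul, ← sub_eq_add_neg]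
  constructor
  · have hsub : closedBall z (δ / (K + η)) ⊆ S :=
      (closedBall_subset_sublevel_inter_ball
        (fun s hs => (hρg s (ball_subset_ball (min_le_right _ _) hs)).2) (by positivity)
        (by rw [div_lt_iff₀ (by positivity)]; linarith) (by field_simp; rfl)).trans
      (inter_subset_inter_right _ (ball_subset_ball (min_le_left _ _)))
    calc (K + η)⁻¹ = (2 * δ)⁻¹ * volume.real (closedBall z (δ / (K + η))) := by
          rw [Real.volume_real_closedBall (by positivity)]; field_simp
      _ ≤ (2 * δ)⁻¹ * volume.real S := by
          gcongr
          exact ((measure_mono inter_subset_right).trans_lt measure_ball_lt_top).ne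
  · -- The crude bound from `ρ₀` confines `S` to radius `2δ/K`, where the sharp bounds hold.
    have hS : S ⊆ closedBall z (δ / (K - K / 2)) :=
      (inter_subset_inter_right _ (ball_subset_ball hερ₀)).trans
        (sublevel_inter_ball_subset_closedBall (fun s hs => (hρ₀g s hs).1) (by linarith))
    have hsub : S ⊆ closedBall z (δ / (K - η)) :=
      (subset_inter inter_subset_left (hS.trans (closedBall_subset_ball
        (by rw [div_lt_iff₀ (by linarith)]; linarith)))).trans
      (sublevel_inter_ball_subset_closedBall (fun s hs => (hρg s hs).1) hηK)
    calc (2 * δ)⁻¹ * volume.real S ≤ (2 * δ)⁻¹ * volume.real (closedBall z (δ / (K - η))) := by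
          gcongr
          exact measure_closedBall_lt_top.ne
      _ = (K - η)⁻¹ := by
          rw [Real.volume_real_closedBall (div_nonneg hδ.le (by linarith))]
          field_simp

theorem mem_Ioo_of_apply_eq {g : ℝ → ℝ} {a b x s : ℝ} (hga : g a ≠ x) (hgb : g b ≠ x)
    (hs : s ∈ Icc a b) (hgs : g s = x) : s ∈ Ioo a b :=
  ⟨hs.1.lt_of_ne (by rintro rfl; exact hga hgs), hs.2.lt_of_ne (by rintro rfl; exact hgb hgs)⟩

theorem finite_setOf_apply_eq {g g' : ℝ → ℝ} {a b x : ℝ} (hg : ContinuousOn g (Icc a b))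
    (hga : g a ≠ x) (hgb : g b ≠ x)
    (hg' : ∀ z ∈ Ioo a b, g z = x → HasDerivAt g (g' z) z ∧ g' z ≠ 0) :
    {s ∈ Ioo a b | g s = x}.Finite := by
  have hZ : {s ∈ Ioo a b | g s = x} = Icc a b ∩ g ⁻¹' {x} :=
    Subset.antisymm (fun s hs => ⟨Ioo_subset_Icc_self hs.1, hs.2⟩)
      fun s hs => ⟨mem_Ioo_of_apply_eq hga hgb hs.1 hs.2, hs.2⟩
  refine IsCompact.finite ?_ (isDiscrete_iff_nhdsNE.2 fun z hz => ?_)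
  · rw [hZ]
    exact isCompact_Icc.of_isClosed_subset
      (hg.preimage_isClosed_of_isClosed isClosed_Icc isClosed_singleton) inter_subset_left
  · obtain ⟨hd, hd0⟩ := hg' z hz.1 hz.2
    rw [inf_principal_eq_bot]
    filter_upwards [hd.eventually_ne hd0] with s hs hsZ
    exact hs (hsZ.2.trans hz.2.symm)

theorem ContinuousOn.eventually_setOf_abs_sub_le_subset {g : ℝ → ℝ} {a b x : ℝ} {U : Set ℝ}
    (hg : ContinuousOn g (Icc a b)) (hU : IsOpen U) (hZU : ∀ s ∈ Icc a b, g s = x → s ∈ U) :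
    ∀ᶠ δ in 𝓝 0, {s ∈ Icc a b | |g s - x| ≤ δ} ⊆ U := by
  obtain ⟨m, hm, hmU⟩ := (isCompact_Icc.diff hU).exists_forall_le'
    ((hg.mono sdiff_subset).sub continuousOn_const).abs
    fun s hs => abs_pos.2 (sub_ne_zero.2 fun h => hs.2 (hZU s hs.1 h))
  filter_upwards [eventually_lt_nhds hm] with δ hδ s hs
  by_contra hsU
  exact (hδ.trans_le (hmU s ⟨hs.1, hsU⟩)).not_ge hs.2

theorem ContinuousOn.isClosed_setOf_abs_sub_le {g : ℝ → ℝ} {a b x δ : ℝ}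
    (hg : ContinuousOn g (Icc a b)) : IsClosed {s ∈ Icc a b | |g s - x| ≤ δ} :=
  hg.preimage_isClosed_of_isClosed (t := {y | |y - x| ≤ δ}) isClosed_Icc
    (isClosed_le (by fun_prop) continuous_const)

theorem Set.Finite.eventually_pairwiseDisjoint_ball {α : Type*} [MetricSpace α] {Z : Set α}
    (hZ : Z.Finite) : ∀ᶠ ε in 𝓝[>] (0 : ℝ), Z.PairwiseDisjoint (ball · ε) :=
  hZ.eventually_all.2 fun z _ => hZ.eventually_all.2 fun z' _ => by
    by_cases hzz' : z = z'
    · exact Eventually.of_forall fun _ h => absurd hzz' h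
    · filter_upwards [eventually_nhdsGT_lt (half_pos (dist_pos.2 hzz'))] with ε hε _
      exact ball_disjoint_ball (by linarith)

theorem tendsto_occupation_Icc {g g' : ℝ → ℝ} {a b x : ℝ} (hg : ContinuousOn g (Icc a b))
    (hga : g a ≠ x) (hgb : g b ≠ x)
    (hg' : ∀ z ∈ Ioo a b, g z = x → HasDerivAt g (g' z) z ∧ g' z ≠ 0) :
    Tendsto (fun δ => (2 * δ)⁻¹ * volume.real {s ∈ Icc a b | |g s - x| ≤ δ}) (𝓝[>] 0)
      (𝓝 (∑ z ∈ (finite_setOf_apply_eq hg hga hgb hg').toFinset, |g' z|⁻¹)) := by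
  set Z := {s ∈ Ioo a b | g s = x}
  have hZ : Z.Finite := finite_setOf_apply_eq hg hga hgb hg'
  set F := hZ.toFinset
  have hball : ∀ᶠ ε in 𝓝[>] 0, ∀ z ∈ Z, ball z ε ⊆ Ioo a b ∧
      Tendsto (fun δ => (2 * δ)⁻¹ * volume.real ({s | |g s - x| ≤ δ} ∩ ball z ε)) (𝓝[>] 0)
        (𝓝 |g' z|⁻¹) :=
    hZ.eventually_all.2 fun z hz =>
      ((eventually_ball_subset (isOpen_Ioo.mem_nhds hz.1)).filter_mono nhdsWithin_le_nhds).and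
        (by simpa only [hz.2] using (hg' z hz.1 hz.2).1.tendsto_occupation_ball (hg' z hz.1 hz.2).2)
  obtain ⟨ε, hεpos : 0 < ε, hε, hεdisj⟩ :=
    (eventually_mem_nhdsWithin.and (hball.and hZ.eventually_pairwiseDisjoint_ball)).exists
  have hcover : ∀ᶠ δ in 𝓝[>] 0, {s ∈ Icc a b | |g s - x| ≤ δ} ⊆ ⋃ z ∈ F, ball z ε :=
    (hg.eventually_setOf_abs_sub_le_subset (isOpen_biUnion fun _ _ => isOpen_ball)
      fun s hs hgs => mem_biUnion (hZ.mem_toFinset.2 ⟨mem_Ioo_of_apply_eq hga hgb hs hgs, hgs⟩)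
        (mem_ball_self hεpos)).filter_mono nhdsWithin_le_nhds
  have hsplit : ∀ᶠ δ in 𝓝[>] 0, volume.real {s ∈ Icc a b | |g s - x| ≤ δ} =
      ∑ z ∈ F, volume.real ({s | |g s - x| ≤ δ} ∩ ball z ε) := by
    filter_upwards [hcover] with δ hδ
    rw [← inter_eq_left.2 hδ, inter_iUnion₂, measureReal_biUnion_finset]
    · refine Finset.sum_congr rfl fun z hz => congrArg _ ?_
      ext s
      exact ⟨fun h => ⟨h.1.2, h.2⟩,
        fun h => ⟨⟨Ioo_subset_Icc_self ((hε z (hZ.mem_toFinset.1 hz)).1 h.2), h.1⟩, h.2⟩⟩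
    · exact (hZ.coe_toFinset ▸ hεdisj).mono fun _ => inter_subset_right
    · exact fun z _ => hg.isClosed_setOf_abs_sub_le.measurableSet.inter measurableSet_ball
  refine (tendsto_finsetSum F fun z hz => (hε z (hZ.mem_toFinset.1 hz)).2).congr' ?_
  filter_upwards [hsplit] with δ hδ
  rw [hδ, Finset.mul_sum]

theorem indicator_setOf_abs_sub_le_ae_eq {f g : ℝ → ℝ} {a b x δ : ℝ}
    (hfg : EqOn f g (Ioo a b)) :
    {u | |f u - x| ≤ δ}.indicator (fun _ => (1 : ℝ)) =ᵐ[volume.restrict (Icc a b)]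
      {s ∈ Icc a b | |g s - x| ≤ δ}.indicator (fun _ => 1) := by
  rw [← Measure.restrict_congr_set Ioo_ae_eq_Icc]
  refine ae_restrict_of_forall_mem measurableSet_Ioo fun s hs => ?_
  simp [indicator, hfg hs, (Ioo_subset_Icc_self hs).1, (Ioo_subset_Icc_self hs).2]

theorem intervalIntegrable_indicator_setOf_abs_sub_le {f g : ℝ → ℝ} {a b x δ : ℝ} (hab : a ≤ b)
    (hfg : EqOn f g (Ioo a b)) (hg : ContinuousOn g (Icc a b)) :
    IntervalIntegrable ({u | |f u - x| ≤ δ}.indicator (fun _ => (1 : ℝ))) volume a b := by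
  rw [intervalIntegrable_iff_integrableOn_Icc_of_le hab]
  exact ((integrableOn_const measure_Icc_lt_top.ne).indicator
    hg.isClosed_setOf_abs_sub_le.measurableSet).congr_fun_ae
      (indicator_setOf_abs_sub_le_ae_eq hfg).symm

theorem integral_indicator_setOf_abs_sub_le {f g : ℝ → ℝ} {a b x δ : ℝ} (hab : a ≤ b)
    (hfg : EqOn f g (Ioo a b)) (hg : ContinuousOn g (Icc a b)) :
    ∫ s in a..b, {u | |f u - x| ≤ δ}.indicator (fun _ => (1 : ℝ)) s =
      volume.real {s ∈ Icc a b | |g s - x| ≤ δ} := by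
  rw [intervalIntegral.integral_of_le hab, ← integral_Icc_eq_integral_Ioc,
    integral_congr_ae (indicator_setOf_abs_sub_le_ae_eq hfg),
    setIntegral_indicator hg.isClosed_setOf_abs_sub_le.measurableSet, setIntegral_const,
    inter_eq_right.2 (sep_subset _ _), smul_eq_mul, mul_one]

def crossingsOn (f : ℝ → ℝ) (x a b : ℝ) : Set ℝ :=
  {s | s ∈ Ioo a b ∧ ContinuousAt f s ∧ f s = x}

theorem crossingsOn_eq_of_eqOn {f g : ℝ → ℝ} {x a b : ℝ} (hfg : EqOn f g (Ioo a b))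
    (hg : ContinuousOn g (Icc a b)) : crossingsOn f x a b = {s ∈ Ioo a b | g s = x} := by
  ext s
  refine ⟨fun ⟨hs, _, hfs⟩ => ⟨hs, (hfg hs).symm.trans hfs⟩,
    fun ⟨hs, hgs⟩ => ⟨hs, ?_, (hfg hs).trans hgs⟩⟩
  exact (hg.continuousAt (Icc_mem_nhds hs.1 hs.2)).congr
    (eventuallyEq_of_mem (isOpen_Ioo.mem_nhds hs) fun u hu => (hfg hu).symm)

theorem crossingsOn_union {f : ℝ → ℝ} {x a b c : ℝ} (hab : a ≤ b) (hbc : b ≤ c)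
    (hb : b ∈ Ioo a c → f b ≠ x) :
    crossingsOn f x a b ∪ crossingsOn f x b c = crossingsOn f x a c := by
  ext s
  simp only [crossingsOn, mem_union, mem_ofPred_eq, mem_Ioo]
  constructor
  · rintro (⟨⟨h₁, h₂⟩, h⟩ | ⟨⟨h₁, h₂⟩, h⟩)
    · exact ⟨⟨h₁, h₂.trans_le hbc⟩, h⟩
    · exact ⟨⟨hab.trans_lt h₁, h₂⟩, h⟩
  · rintro ⟨⟨h₁, h₂⟩, h⟩
    rcases lt_trichotomy s b with hsb | rfl | hbs
    · exact Or.inl ⟨⟨h₁, hsb⟩, h⟩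
    · exact absurd h.2 (hb ⟨h₁, h₂⟩)
    · exact Or.inr ⟨⟨hbs, h₂⟩, h⟩

theorem ncard_crossingsOn_eq_sum {f : ℝ → ℝ} {x : ℝ} {τ : ℕ → ℝ} {n : ℕ}
    (hτ : MonotoneOn τ (Iic n)) (hf : ∀ i < n, 0 < i → f (τ i) ≠ x)
    (hfin : ∀ i < n, (crossingsOn f x (τ i) (τ (i + 1))).Finite) :
    (crossingsOn f x (τ 0) (τ n)).Finite ∧
      (crossingsOn f x (τ 0) (τ n)).ncard =
        ∑ i ∈ Finset.range n, (crossingsOn f x (τ i) (τ (i + 1))).ncard := by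
  induction n with
  | zero => simp [crossingsOn]
  | succ n ih =>
    obtain ⟨hfin₀, hcard⟩ := ih (hτ.mono (Iic_subset_Iic.2 n.le_succ))
      (fun i hi => hf i (by omega)) (fun i hi => hfin i (by omega))
    have hdisj : Disjoint (crossingsOn f x (τ 0) (τ n)) (crossingsOn f x (τ n) (τ (n + 1))) :=
      disjoint_left.2 fun s hs hs' => hs.1.2.not_gt hs'.1.1
    rw [← crossingsOn_union (hτ (by simp) (by simp) n.zero_le) (hτ (by simp) (by simp) n.le_succ)
      fun h => hf n n.lt_succ_self (Nat.pos_of_ne_zero (by rintro rfl; exact h.1.false))]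
    exact ⟨hfin₀.union (hfin n n.lt_succ_self), by
      rw [ncard_union_eq hdisj hfin₀ (hfin n n.lt_succ_self), hcard, Finset.sum_range_succ]⟩

theorem tendsto_occupation_of_piecewise {f : ℝ → ℝ} {g : ℕ → ℝ → ℝ} {τ : ℕ → ℝ} {x c : ℝ} {n : ℕ}
    (hτ : ∀ i < n, τ i < τ (i + 1)) (hfg : ∀ i < n, EqOn f (g i) (Ico (τ i) (τ (i + 1))))
    (hg : ∀ i < n, ContinuousOn (g i) (Icc (τ i) (τ (i + 1))))
    (hgτ : ∀ i < n, g i (τ i) ≠ x ∧ g i (τ (i + 1)) ≠ x)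
    (hg' : ∀ i < n, ∀ z ∈ Ioo (τ i) (τ (i + 1)), g i z = x → HasDerivAt (g i) c z) (hc : c ≠ 0) :
    Tendsto (fun δ => (2 * δ)⁻¹ *
        ∫ s in τ 0..τ n, {u | |f u - x| ≤ δ}.indicator (fun _ => (1 : ℝ)) s)
      (𝓝[>] 0) (𝓝 ((crossingsOn f x (τ 0) (τ n)).ncard * |c|⁻¹)) := by
  have hfg' : ∀ i < n, EqOn f (g i) (Ioo (τ i) (τ (i + 1))) :=
    fun i hi => (hfg i hi).mono Ioo_subset_Ico_self
  have hzeros : ∀ i < n, ∀ z ∈ Ioo (τ i) (τ (i + 1)), g i z = x → HasDerivAt (g i) c z ∧ c ≠ 0 :=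
    fun i hi z hz hgz => ⟨hg' i hi z hz hgz, hc⟩
  have hZ : ∀ i < n, {s ∈ Ioo (τ i) (τ (i + 1)) | g i s = x}.Finite := fun i hi =>
    finite_setOf_apply_eq (g' := fun _ => c) (hg i hi) (hgτ i hi).1 (hgτ i hi).2 (hzeros i hi)
  have hcross : ∀ i < n,
      crossingsOn f x (τ i) (τ (i + 1)) = {s ∈ Ioo (τ i) (τ (i + 1)) | g i s = x} :=
    fun i hi => crossingsOn_eq_of_eqOn (hfg' i hi) (hg i hi)
  obtain ⟨-, hcard⟩ := ncard_crossingsOn_eq_sum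
    (monotoneOn_of_le_add_one ordConnected_Iic fun i _ _ hi => (hτ i hi).le)
    (fun i hi _ => hfg i hi ⟨le_rfl, hτ i hi⟩ ▸ (hgτ i hi).1) fun i hi => hcross i hi ▸ hZ i hi
  have hint : ∀ δ, ∫ s in τ 0..τ n, {u | |f u - x| ≤ δ}.indicator (fun _ => (1 : ℝ)) s =
      ∑ i ∈ Finset.range n, volume.real {s ∈ Icc (τ i) (τ (i + 1)) | |g i s - x| ≤ δ} := by
    intro δ
    rw [← intervalIntegral.sum_integral_adjacent_intervals fun i hi =>
      intervalIntegrable_indicator_setOf_abs_sub_le (hτ i hi).le (hfg' i hi) (hg i hi)]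
    refine Finset.sum_congr rfl fun i hi => ?_
    replace hi := Finset.mem_range.1 hi
    exact integral_indicator_setOf_abs_sub_le (hτ i hi).le (hfg' i hi) (hg i hi)
  simp_rw [hint, Finset.mul_sum, hcard, Nat.cast_sum, Finset.sum_mul]
  refine tendsto_finsetSum _ fun i hi => ?_
  replace hi := Finset.mem_range.1 hi
  convert tendsto_occupation_Icc (g' := fun _ => c) (hg i hi) (hgτ i hi).1 (hgτ i hi).2
    (hzeros i hi) using 2
  rw [Finset.sum_const, nsmul_eq_mul, hcross i hi, ncard_eq_toFinset_card _ (hZ i hi)]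

theorem local_time_crossing_relation_general
    {Ω : Type*} [MeasurableSpace Ω] (P : Measure Ω)
    (H x : ℝ) (hH : 0 < H)
    (r : ℝ → ℝ) (hrx : r x ≠ 0)
    (X : Ω → ℝ → ℝ)
    (hpath : ∀ᵐ ω ∂P, ∃ (k : ℕ) (τ : ℕ → ℝ) (g : ℕ → ℝ → ℝ),
      τ 0 = 0 ∧ τ (k+1) = H ∧ (∀ i ≤ k, τ i < τ (i+1)) ∧
      (∀ i ≤ k, ∀ s ∈ Icc (τ i) (τ (i+1)),
        HasDerivWithinAt (g i) (r (g i s)) (Icc (τ i) (τ (i+1))) s) ∧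
      (∀ i ≤ k, ∀ s ∈ Ico (τ i) (τ (i+1)), X ω s = g i s) ∧
      X ω H = g k H ∧
      (∀ i ≤ k, g i (τ i) ≠ x ∧ g i (τ (i+1)) ≠ x)) :
    ∀ᵐ ω ∂P, ∃ l : ℝ,
      Tendsto
        (fun δ : ℝ => (1 / (2 * δ)) *
          ∫ s in Icc (0:ℝ) H, ({u : ℝ | |X ω u - x| ≤ δ}.indicator (fun _ => (1:ℝ)) s))
        (𝓝[>] (0:ℝ)) (𝓝 l) ∧
      ((crossSet H x (X ω)).ncard : ℝ) = |r x| * l := by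
  filter_upwards [hpath] with ω hω
  obtain ⟨k, τ, g, hτ0, hτH, hτ, hg, hXg, -, havoid⟩ := hω
  have hlim := tendsto_occupation_of_piecewise (f := X ω) (n := k + 1) (c := r x)
    (fun i hi => hτ i (Nat.lt_succ_iff.1 hi)) (fun i hi => hXg i (Nat.lt_succ_iff.1 hi))
    (fun i hi s hs => (hg i (Nat.lt_succ_iff.1 hi) s hs).continuousWithinAt)
    (fun i hi => havoid i (Nat.lt_succ_iff.1 hi))
    (fun i hi z hz hgz => hgz ▸ (hg i (Nat.lt_succ_iff.1 hi) z (Ioo_subset_Icc_self hz)).hasDerivAt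
      (Icc_mem_nhds hz.1 hz.2)) hrx
  rw [hτ0, hτH] at hlim
  refine ⟨(crossSet H x (X ω)).ncard * |r x|⁻¹, ?_, by field_simp⟩
  simp only [one_div, integral_Icc_eq_integral_Ioc, ← intervalIntegral.integral_of_le hH.le]
  exact hlim

/-- **Local time–crossing relation (Theorem 2).** If almost every path of `X` is a
piecewise C¹ path which is a piecewise integral curve of `r` avoiding the level `x` at
endpoints and jumps, and `r x ≠ 0`, then almost surely the local time
`l_x(H) = lim_{δ→0⁺} (1/(2δ)) ∫₀^H 1_{|X(t)−x|≤δ} dt` exists and the number of continuous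
crossings satisfies `c_x(H) = |r(x)| ⬝ l_x(H)`. -/
theorem local_time_crossing_relation
    {Ω : Type*} [MeasurableSpace Ω] (P : Measure Ω) [IsProbabilityMeasure P]
    (H x : ℝ) (hH : 0 < H)
    (r : ℝ → ℝ) (hr : ContDiff ℝ 1 r) (hrx : r x ≠ 0)
    (X : Ω → ℝ → ℝ)
    (hpath : ∀ᵐ ω ∂P, ∃ (k : ℕ) (τ : ℕ → ℝ) (g : ℕ → ℝ → ℝ),
      τ 0 = 0 ∧ τ (k+1) = H ∧ (∀ i ≤ k, τ i < τ (i+1)) ∧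
      (∀ i ≤ k, ∀ s ∈ Icc (τ i) (τ (i+1)),
        HasDerivWithinAt (g i) (r (g i s)) (Icc (τ i) (τ (i+1))) s) ∧
      (∀ i ≤ k, ∀ s ∈ Ico (τ i) (τ (i+1)), X ω s = g i s) ∧
      X ω H = g k H ∧
      (∀ i ≤ k, g i (τ i) ≠ x ∧ g i (τ (i+1)) ≠ x)) :
    ∀ᵐ ω ∂P, ∃ l : ℝ,
      Tendsto
        (fun δ : ℝ => (1 / (2 * δ)) *
          ∫ s in Icc (0:ℝ) H, ({u : ℝ | |X ω u - x| ≤ δ}.indicator (fun _ => (1:ℝ)) s))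
        (𝓝[>] (0:ℝ)) (𝓝 l) ∧
      ((crossSet H x (X ω)).ncard : ℝ) = |r x| * l :=
  local_time_crossing_relation_general P H x hH r hrx X hpath
end

section
/- Under the hypotheses of the Dalmao–Mordecki formula, assume in addition that the process is stationary in the sense that there is a single density q : ℝ → ℝ, continuous on a neighborhood of x, such that for every t ∈ [0,H] the law of X(t) has density q with respect to Lebesgue measure. Then the expected number of continuous crossings of the level x by X on [0,H] is E[c_x(H)] = H · |r(x)| · q(x). (Stationary case, one-dimensional Kac–Rice formula.) -/
open MeasureTheory Filter Set Topology
open scoped ENNReal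

/-!
Crossings are counted through occupation times. On each piece the path is an integral curve of
`r`, so at a level `y` with `r y ≠ 0` it passes strictly upwards or strictly downwards and hits `y`
at most once. Take a band `B` around `x` on which `r` does not vanish and which is so thin that it
contains no value of the path at a jump or at an endpoint. A piece then either misses `B` or
crosses it entirely, and by the one-dimensional change of variables it spends time `∫_B |r|⁻¹` in
`B` exactly when it crosses `x`. Hence the time spent in `B` by the whole path is
`c_x(H) ∫_B |r|⁻¹`, and it is always at most `(N + 1) ∫_B |r|⁻¹`. By Tonelli the expected time
spent in `B` is `H ∫_B q`. Dividing by `∫_B |r|⁻¹`, letting `B` shrink to `x` and using dominated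
convergence with the bound `N + 1` gives `E c_x(H) = H q(x) / |r(x)|⁻¹`.
-/

lemma ContinuousOn.measurableSet_Ico_inter_preimage {g : ℝ → ℝ} {a b : ℝ} {B : Set ℝ}
    (hg : ContinuousOn g (Icc a b)) (hB : IsClosed B) : MeasurableSet (Ico a b ∩ g ⁻¹' B) := by
  have := (measurableSet_Ico (a := a) (b := b)).inter
    (hg.preimage_isClosed_of_isClosed isClosed_Icc hB).measurableSet
  rwa [← inter_assoc, inter_eq_left.2 Ico_subset_Icc_self] at this

namespace IsIntegralCurveOn

variable {r g : ℝ → ℝ} {a b l u t s x y : ℝ} {B : Set ℝ}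

lemma neg {S : Set ℝ} (hg : IsIntegralCurveOn g (fun _ => r) S) :
    IsIntegralCurveOn (-g) (fun _ z => -r (-z)) S :=
  fun t ht => by simpa using (hg t ht).neg

variable (hg : IsIntegralCurveOn g (fun _ => r) (Icc a b))
include hg

lemma lt_of_le_of_pos (hy : 0 < r y) (hat : a ≤ t) (hts : t < s) (hsb : s ≤ b)
    (hgt : y ≤ g t) : y < g s := by
  -- the constant `y` is a lower fence: wherever `g` touches it, `g' = r y > 0`
  have hle : ∀ p ∈ Icc t b, y ≤ g p := by
    refine image_le_of_deriv_right_lt_deriv_boundary' (f' := fun _ => 0) continuousOn_const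
      (fun p _ => hasDerivWithinAt_const _ _ _) hgt
      (hg.continuousOn.mono (Icc_subset_Icc_left hat))
      (fun p hp => (hg p ⟨hat.trans hp.1, hp.2.le⟩).mono_of_mem_nhdsWithin ?_)
      (fun p _ hp => hp ▸ hy)
    exact mem_of_superset (Icc_mem_nhdsGE hp.2) (Icc_subset_Icc_left (hat.trans hp.1))
  refine (hle s ⟨hts.le, hsb⟩).lt_of_ne fun hys => ?_
  -- `s` would minimise `g` on `[t, s]`, where the left derivative `r y` is positive
  have hmin : IsLocalMinOn g (Icc t s) s :=
    IsMinOn.localize fun p hp => hys ▸ hle p ⟨hp.1, hp.2.trans hsb⟩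
  have hd : HasDerivWithinAt g (r y) (Icc t s) s := by
    simpa [← hys] using (hg s ⟨by linarith, hsb⟩).mono (Icc_subset_Icc hat hsb)
  have hcone : t - s ∈ posTangentConeAt (Icc t s) s :=
    sub_mem_posTangentConeAt_of_segment_subset (by rw [segment_symm, segment_eq_Icc hts.le])
  have := hmin.hasFDerivWithinAt_nonneg hd.hasFDerivWithinAt hcone
  rw [ContinuousLinearMap.toSpanSingleton_apply, smul_eq_mul] at this
  nlinarith

lemma lt_of_le_of_neg (hy : r y < 0) (hat : a ≤ t) (hts : t < s) (hsb : s ≤ b)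
    (hgt : g t ≤ y) : g s < y := by
  simpa using hg.neg.lt_of_le_of_pos (y := -y) (by simpa using hy) hat hts hsb
    (by simpa using hgt)

lemma ne_of_lt (ht : t ∈ Icc a b) (hs : s ∈ Icc a b) (hts : t < s) (hr : r (g t) ≠ 0) :
    g s ≠ g t := by
  rcases hr.lt_or_gt with hneg | hpos
  · exact (hg.lt_of_le_of_neg hneg ht.1 hts hs.2 le_rfl).ne
  · exact (hg.lt_of_le_of_pos hpos ht.1 hts hs.2 le_rfl).ne'

lemma injOn : InjOn g (Icc a b ∩ g ⁻¹' {y | r y ≠ 0}) := by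
  intro t ht s hs hgts
  by_contra hne
  rcases lt_or_gt_of_ne hne with hts | hst
  · exact hg.ne_of_lt ht.1 hs.1 hts ht.2 hgts.symm
  · exact hg.ne_of_lt hs.1 ht.1 hst hs.2 hgts

lemma mem_uIoo (ht : t ∈ Ioo a b) (hr : r (g t) ≠ 0) : g t ∈ uIoo (g a) (g b) := by
  rcases hr.lt_or_gt with hneg | hpos
  · refine Ioo_subset_uIoo' ⟨hg.lt_of_le_of_neg hneg ht.1.le ht.2 le_rfl le_rfl, ?_⟩
    exact lt_of_not_ge fun h => (hg.lt_of_le_of_neg hneg le_rfl ht.1 ht.2.le h).false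
  · refine Ioo_subset_uIoo ⟨?_, hg.lt_of_le_of_pos hpos ht.1.le ht.2 le_rfl le_rfl⟩
    exact lt_of_not_ge fun h => (hg.lt_of_le_of_pos hpos le_rfl ht.1 ht.2.le h).false

lemma subsingleton_Ico_inter_preimage (hx : r x ≠ 0) : (Ico a b ∩ g ⁻¹' {x}).Subsingleton :=
  fun p hp q hq => hg.injOn ⟨Ico_subset_Icc_self hp.1, by simpa [mem_singleton_iff.1 hp.2]⟩
    ⟨Ico_subset_Icc_self hq.1, by simpa [mem_singleton_iff.1 hq.2]⟩ (hp.2.trans hq.2.symm)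

lemma Icc_subset_image (hga : g a ∉ Icc l u) (hgb : g b ∉ Icc l u) (ht : t ∈ Icc a b)
    (hgt : g t ∈ Icc l u) (hr : r (g t) ≠ 0) : Icc l u ⊆ g '' Ico a b := by
  have hta : t ≠ a := by rintro rfl; exact hga hgt
  have htb : t ≠ b := by rintro rfl; exact hgb hgt
  have hmem := hg.mem_uIoo ⟨ht.1.lt_of_ne' hta, ht.2.lt_of_ne htb⟩ hr
  -- the endpoint values are outside the band, on opposite sides of it
  have hsub : Icc l u ⊆ uIcc (g a) (g b) := by
    have hmin : g a ⊓ g b ∉ Icc l u := min_rec' (· ∉ Icc l u) hga hgb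
    have hmax : g a ⊔ g b ∉ Icc l u := max_rec' (· ∉ Icc l u) hga hgb
    exact Icc_subset_Icc (not_lt.1 fun h => hmin ⟨h.le, hmem.1.le.trans hgt.2⟩)
      (not_lt.1 fun h => hmax ⟨hgt.1.trans hmem.2.le, h.le⟩)
  have hab := ht.1.trans ht.2
  have hivt := intermediate_value_uIcc (a := a) (b := b) (f := g)
    (by rw [uIcc_of_le hab]; exact hg.continuousOn)
  rw [uIcc_of_le hab] at hivt
  intro z hz
  obtain ⟨p, hp, rfl⟩ := hivt (hsub hz)
  refine ⟨p, ⟨hp.1, hp.2.lt_of_ne ?_⟩, rfl⟩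
  rintro rfl
  exact hgb hz

lemma volume_Ico_inter_preimage (hB : IsClosed B) (hr : ∀ y ∈ B, r y ≠ 0) :
    volume (Ico a b ∩ g ⁻¹' B) = ∫⁻ y in g '' (Ico a b ∩ g ⁻¹' B), ENNReal.ofReal |r y|⁻¹ := by
  have hV : Ico a b ∩ g ⁻¹' B ⊆ Icc a b ∩ g ⁻¹' {y | r y ≠ 0} :=
    fun t ht => ⟨Ico_subset_Icc_self ht.1, hr _ ht.2⟩
  have hmeas := hg.continuousOn.measurableSet_Ico_inter_preimage hB
  rw [lintegral_image_eq_lintegral_abs_deriv_mul hmeas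
    (fun t ht => (hg t (hV ht).1).mono fun p hp => (hV hp).1) (hg.injOn.mono hV)]
  refine (setLIntegral_one _).symm.trans (setLIntegral_congr_fun hmeas fun t ht => ?_)
  rw [← ENNReal.ofReal_mul (abs_nonneg _), mul_inv_cancel₀ (abs_ne_zero.2 (hr _ ht.2)),
    ENNReal.ofReal_one]

lemma volume_Ico_inter_preimage_le (hB : IsClosed B) (hr : ∀ y ∈ B, r y ≠ 0) :
    volume (Ico a b ∩ g ⁻¹' B) ≤ ∫⁻ y in B, ENNReal.ofReal |r y|⁻¹ :=
  (hg.volume_Ico_inter_preimage hB hr).trans_le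
    (lintegral_mono_set ((image_mono inter_subset_right).trans (image_preimage_subset g B)))

lemma volume_Ico_inter_preimage_Icc (hr : ∀ y ∈ Icc l u, r y ≠ 0) (hx : x ∈ Icc l u)
    (hga : g a ∉ Icc l u) (hgb : g b ∉ Icc l u) :
    volume (Ico a b ∩ g ⁻¹' Icc l u) =
      Measure.count (Ico a b ∩ g ⁻¹' {x}) * ∫⁻ y in Icc l u, ENNReal.ofReal |r y|⁻¹ := by
  rcases (Ico a b ∩ g ⁻¹' Icc l u).eq_empty_or_nonempty with hV | ⟨t, ht⟩
  · have hC : Ico a b ∩ g ⁻¹' {x} = ∅ := subset_empty_iff.1 <|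
      hV ▸ inter_subset_inter_right _ (preimage_mono (singleton_subset_iff.2 hx))
    simp [hV, hC]
  have hsurj := hg.Icc_subset_image hga hgb (Ico_subset_Icc_self ht.1) ht.2 (hr _ ht.2)
  have himage : g '' (Ico a b ∩ g ⁻¹' Icc l u) = Icc l u := by
    refine ((image_mono inter_subset_right).trans (image_preimage_subset _ _)).antisymm
      fun y hy => ?_
    obtain ⟨p, hp, rfl⟩ := hsurj hy
    exact ⟨p, ⟨hp, hy⟩, rfl⟩
  obtain ⟨s, hs, hgs⟩ := hsurj hx
  rw [hg.volume_Ico_inter_preimage isClosed_Icc hr, himage,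
    (hg.subsingleton_Ico_inter_preimage (hr x hx)).eq_singleton_of_mem ⟨hs, hgs⟩,
    Measure.count_singleton, one_mul]

end IsIntegralCurveOn

lemma eventually_notMem_Icc_sub_add {x y : ℝ} (h : y ≠ x) :
    ∀ᶠ δ in 𝓝 (0 : ℝ), y ∉ Icc (x - δ) (x + δ) :=
  (eventually_lt_nhds (abs_sub_pos.2 h)).mono fun _ hδ hy =>
    hδ.not_ge (abs_sub_le_iff.2 ⟨by linarith [hy.2], by linarith [hy.1]⟩)

lemma tendsto_Icc_sub_add_smallSets (x : ℝ) :
    Tendsto (fun δ => Icc (x - δ) (x + δ)) (𝓝 0) (𝓝 x).smallSets := by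
  have hsub : Tendsto (fun δ => x - δ) (𝓝 0) (𝓝 x) := by
    simpa using (tendsto_const_nhds (x := x)).sub (tendsto_id (x := 𝓝 (0 : ℝ)))
  have hadd : Tendsto (fun δ => x + δ) (𝓝 0) (𝓝 x) := by
    simpa using (tendsto_const_nhds (x := x)).add (tendsto_id (x := 𝓝 (0 : ℝ)))
  exact hsub.Icc hadd

lemma eventually_Icc_sub_add_subset {x : ℝ} {U : Set ℝ} (hU : U ∈ 𝓝 x) :
    ∀ᶠ δ in 𝓝 0, Icc (x - δ) (x + δ) ⊆ U :=
  (tendsto_Icc_sub_add_smallSets x).eventually (eventually_smallSets_subset.2 hU)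

lemma tendsto_setIntegral_Icc_sub_add_div {f : ℝ → ℝ} {x : ℝ} (hf : ContinuousAt f x)
    (hfm : StronglyMeasurableAtFilter f (𝓝 x)) :
    Tendsto (fun δ => (∫ y in Icc (x - δ) (x + δ), f y) / (2 * δ)) (𝓝[>] 0) (𝓝 (f x)) := by
  have hvol : (fun δ => volume.real (Icc (x - δ) (x + δ))) =ᶠ[𝓝[>] 0] fun δ => 2 * δ := by
    filter_upwards [self_mem_nhdsWithin] with δ (hδ : 0 < δ)
    rw [Real.volume_real_Icc_of_le (by linarith)]
    ring
  have ho := hf.integral_sub_linear_isLittleO_ae hfm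
    ((tendsto_Icc_sub_add_smallSets x).mono_left nhdsWithin_le_nhds) _ hvol
  have := ho.tendsto_div_nhds_zero.add_const (f x)
  rw [zero_add] at this
  refine this.congr' ?_
  filter_upwards [self_mem_nhdsWithin] with δ (hδ : 0 < δ)
  field_simp
  ring

lemma eventually_pos_setIntegral_Icc_sub_add {f : ℝ → ℝ} {x : ℝ} (hf : ContinuousAt f x)
    (hfm : StronglyMeasurableAtFilter f (𝓝 x)) (hx : 0 < f x) :
    ∀ᶠ δ in 𝓝[>] 0, 0 < ∫ y in Icc (x - δ) (x + δ), f y := by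
  filter_upwards [(tendsto_setIntegral_Icc_sub_add_div hf hfm).eventually (lt_mem_nhds hx),
    self_mem_nhdsWithin] with δ hδf (hδ : 0 < δ)
  exact (div_pos_iff_of_pos_right (by positivity)).1 hδf

lemma tendsto_setIntegral_Icc_sub_add_div_setIntegral {f h : ℝ → ℝ} {x : ℝ}
    (hf : ContinuousAt f x) (hfm : StronglyMeasurableAtFilter f (𝓝 x))
    (hh : ContinuousAt h x) (hhm : StronglyMeasurableAtFilter h (𝓝 x)) (hx : h x ≠ 0) :
    Tendsto (fun δ => (∫ y in Icc (x - δ) (x + δ), f y) / ∫ y in Icc (x - δ) (x + δ), h y)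
      (𝓝[>] 0) (𝓝 (f x / h x)) := by
  refine ((tendsto_setIntegral_Icc_sub_add_div hf hfm).div
    (tendsto_setIntegral_Icc_sub_add_div hh hhm) hx).congr' ?_
  filter_upwards [self_mem_nhdsWithin] with δ (hδ : 0 < δ)
  exact div_div_div_cancel_right₀ (by positivity) _ _

lemma eventually_lintegral_Icc_sub_add_eq_ofReal {f : ℝ → ℝ} {x : ℝ} {U : Set ℝ}
    (hf : ContinuousOn f U) (hU : U ∈ 𝓝 x) (hf₀ : 0 ≤ f) :
    ∀ᶠ δ in 𝓝 0, ∫⁻ y in Icc (x - δ) (x + δ), ENNReal.ofReal (f y) =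
      ENNReal.ofReal (∫ y in Icc (x - δ) (x + δ), f y) := by
  filter_upwards [eventually_Icc_sub_add_subset hU] with δ hδ
  exact (ofReal_integral_eq_lintegral_ofReal ((hf.mono hδ).integrableOn_compact isCompact_Icc)
    (ae_of_all _ hf₀)).symm

lemma measure_Ico_inter_eq_sum {α : Type*} [LinearOrder α] [MeasurableSpace α] (μ : Measure α)
    {τ : ℕ → α} {S : Set α} {m : ℕ}
    (hτ : MonotoneOn τ (Iic m)) (hS : ∀ i < m, MeasurableSet (Ico (τ i) (τ (i + 1)) ∩ S)) :
    μ (Ico (τ 0) (τ m) ∩ S) = ∑ i ∈ Finset.range m, μ (Ico (τ i) (τ (i + 1)) ∩ S) := by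
  induction m with
  | zero => simp
  | succ m ih =>
    have hm : m ∈ Iic (m + 1) := m.le_succ
    rw [Finset.sum_range_succ, ← ih (hτ.mono (Iic_subset_Iic.2 m.le_succ))
      (fun i hi => hS i (by omega)), ← measure_union ?_ (hS m m.lt_succ_self),
      ← union_inter_distrib_right, Ico_union_Ico_eq_Ico (hτ (Nat.zero_le _) hm (Nat.zero_le m))
      (hτ hm (mem_Iic.2 le_rfl) m.le_succ)]
    exact Ico_disjoint_Ico_same.mono inter_subset_left inter_subset_left

structure IsPiecewiseIntegralCurve (r f : ℝ → ℝ) (H : ℝ) (n : ℕ) (τ : ℕ → ℝ)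
    (g : ℕ → ℝ → ℝ) : Prop where
  τ_zero : τ 0 = 0
  τ_last : τ (n + 1) = H
  τ_lt_succ : ∀ i ≤ n, τ i < τ (i + 1)
  isIntegralCurveOn : ∀ i ≤ n, IsIntegralCurveOn (g i) (fun _ => r) (Icc (τ i) (τ (i + 1)))
  eqOn : ∀ i ≤ n, EqOn f (g i) (Ico (τ i) (τ (i + 1)))

namespace IsPiecewiseIntegralCurve

variable {r f : ℝ → ℝ} {H x l u : ℝ} {n : ℕ} {τ : ℕ → ℝ} {g : ℕ → ℝ → ℝ} {S : Set ℝ}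
  (hf : IsPiecewiseIntegralCurve r f H n τ g)
include hf

lemma strictMonoOn : StrictMonoOn τ (Iic (n + 1)) :=
  strictMonoOn_Iic_of_lt_succ fun i hi => hf.τ_lt_succ i (Nat.lt_succ_iff.1 hi)

lemma measure_Ico_inter_preimage (μ : Measure ℝ) (hS : IsClosed S) :
    μ (Ico 0 H ∩ f ⁻¹' S) =
      ∑ i ∈ Finset.range (n + 1), μ (Ico (τ i) (τ (i + 1)) ∩ g i ⁻¹' S) := by
  have hpiece : ∀ i < n + 1,
      Ico (τ i) (τ (i + 1)) ∩ f ⁻¹' S = Ico (τ i) (τ (i + 1)) ∩ g i ⁻¹' S :=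
    fun i hi => (hf.eqOn i (Nat.lt_succ_iff.1 hi)).inter_preimage_eq S
  rw [← hf.τ_zero, ← hf.τ_last, measure_Ico_inter_eq_sum μ hf.strictMonoOn.monotoneOn
    fun i hi => hpiece i hi ▸ ((hf.isIntegralCurveOn i (Nat.lt_succ_iff.1 hi)).continuousOn
      |>.measurableSet_Ico_inter_preimage hS)]
  exact Finset.sum_congr rfl fun i hi => by rw [hpiece i (Finset.mem_range.1 hi)]

lemma crossSet_eq (havoid : ∀ i ≤ n, g i (τ i) ≠ x) : crossSet H x f = Ico 0 H ∩ f ⁻¹' {x} := by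
  ext s
  refine ⟨fun ⟨hs, _, hfs⟩ => ⟨Ioo_subset_Ico_self hs, hfs⟩, fun ⟨hs, hfs⟩ => ?_⟩
  rw [← hf.τ_zero, ← hf.τ_last] at hs
  obtain ⟨i, hτi, hin, hsi⟩ : ∃ i, τ i ≤ s ∧ i ≤ n ∧ s < τ (i + 1) := by
    simpa using Ico_subset_biUnion_Ico (n + 1) τ hs
  have hτs : τ i < s := hτi.lt_of_ne fun h => havoid i hin <| by
    rw [← hf.eqOn i hin (left_mem_Ico.2 (hf.τ_lt_succ i hin)), h]; exact hfs
  have h0 : 0 < s := hf.τ_zero ▸ (hf.strictMonoOn.monotoneOn (Nat.zero_le _)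
    (mem_Iic.2 (by omega)) (Nat.zero_le i)).trans_lt hτs
  refine ⟨⟨h0, hf.τ_last ▸ hs.2⟩, ?_, hfs⟩
  have hgi := (hf.isIntegralCurveOn i hin).continuousOn.continuousAt (Icc_mem_nhds hτs hsi)
  refine hgi.congr (eventuallyEq_of_mem (Ioo_mem_nhds hτs hsi) fun p hp => ?_)
  exact (hf.eqOn i hin (Ioo_subset_Ico_self hp)).symm

lemma volume_le (hS : IsClosed S) (hr : ∀ y ∈ S, r y ≠ 0) :
    volume (Ico 0 H ∩ f ⁻¹' S) ≤ (n + 1) * ∫⁻ y in S, ENNReal.ofReal |r y|⁻¹ := by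
  rw [hf.measure_Ico_inter_preimage volume hS]
  calc ∑ i ∈ Finset.range (n + 1), volume (Ico (τ i) (τ (i + 1)) ∩ g i ⁻¹' S)
      ≤ ∑ _i ∈ Finset.range (n + 1), ∫⁻ y in S, ENNReal.ofReal |r y|⁻¹ :=
        Finset.sum_le_sum fun i hi => (hf.isIntegralCurveOn i
          (Finset.mem_range_succ_iff.1 hi)).volume_Ico_inter_preimage_le hS hr
    _ = (n + 1) * ∫⁻ y in S, ENNReal.ofReal |r y|⁻¹ := by simp

lemma volume_eq_ncard_mul (hr : ∀ y ∈ Icc l u, r y ≠ 0) (hx : x ∈ Icc l u)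
    (hend : ∀ i ≤ n, g i (τ i) ∉ Icc l u ∧ g i (τ (i + 1)) ∉ Icc l u) :
    volume (Ico 0 H ∩ f ⁻¹' Icc l u) =
      (crossSet H x f).ncard * ∫⁻ y in Icc l u, ENNReal.ofReal |r y|⁻¹ := by
  have hcross := hf.crossSet_eq fun i hi hx' => (hend i hi).1 (hx' ▸ hx)
  -- crossings are counted by `Measure.count`, so they split over the pieces just like time does
  have hcount := hf.measure_Ico_inter_preimage Measure.count (S := {x}) isClosed_singleton
  have hfin : (crossSet H x f).Finite := by
    refine Measure.count_apply_lt_top.1 ?_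
    rw [hcross, hcount]
    exact ENNReal.sum_lt_top.2 fun i hi => Measure.count_apply_lt_top.2
      ((hf.isIntegralCurveOn i (Finset.mem_range_succ_iff.1 hi)).subsingleton_Ico_inter_preimage
        (hr x hx)).finite
  rw [Set.ncard_eq_toFinset_card _ hfin, ← Measure.count_apply_finite _ hfin, hcross, hcount,
    Finset.sum_mul, hf.measure_Ico_inter_preimage volume isClosed_Icc]
  exact Finset.sum_congr rfl fun i hi => have hin := Finset.mem_range_succ_iff.1 hi
    (hf.isIntegralCurveOn i hin).volume_Ico_inter_preimage_Icc hr hx (hend i hin).1 (hend i hin).2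

lemma toReal_volume_div_le (hS : IsClosed S) (hr : ∀ y ∈ S, r y ≠ 0) {T : ℝ} (hT : 0 < T)
    (hST : ∫⁻ y in S, ENNReal.ofReal |r y|⁻¹ = ENNReal.ofReal T) :
    (volume (Ico 0 H ∩ f ⁻¹' S)).toReal / T ≤ n + 1 := by
  rw [div_le_iff₀ hT]
  refine ENNReal.toReal_le_of_le_ofReal (by positivity) ((hf.volume_le hS hr).trans_eq ?_)
  rw [hST, ENNReal.ofReal_mul (by positivity)]
  norm_cast

lemma tendsto_toReal_volume_div (havoid : ∀ i ≤ n, g i (τ i) ≠ x ∧ g i (τ (i + 1)) ≠ x)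
    (hr : ∀ᶠ y in 𝓝 x, r y ≠ 0) {T : ℝ → ℝ} (hT : ∀ᶠ δ in 𝓝[>] 0, 0 < T δ)
    (hST : ∀ᶠ δ in 𝓝 0,
      ∫⁻ y in Icc (x - δ) (x + δ), ENNReal.ofReal |r y|⁻¹ = ENNReal.ofReal (T δ)) :
    Tendsto (fun δ => (volume (Ico 0 H ∩ f ⁻¹' Icc (x - δ) (x + δ))).toReal / T δ) (𝓝[>] 0)
      (𝓝 (crossSet H x f).ncard) := by
  have hend : ∀ᶠ δ in 𝓝 (0 : ℝ), ∀ i ∈ Iic n,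
      g i (τ i) ∉ Icc (x - δ) (x + δ) ∧ g i (τ (i + 1)) ∉ Icc (x - δ) (x + δ) :=
    (finite_Iic n).eventually_all.2 fun i hi =>
      (eventually_notMem_Icc_sub_add (havoid i hi).1).and
        (eventually_notMem_Icc_sub_add (havoid i hi).2)
  refine tendsto_const_nhds.congr' ?_
  filter_upwards [nhdsWithin_le_nhds (hend.and ((eventually_Icc_sub_add_subset hr).and hST)), hT,
    self_mem_nhdsWithin] with δ ⟨hendδ, hrδ, hSTδ⟩ hTδ (hδ : 0 < δ)
  rw [hf.volume_eq_ncard_mul hrδ (show x ∈ Icc (x - δ) (x + δ) from ⟨by linarith, by linarith⟩)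
    hendδ, hSTδ, ENNReal.toReal_mul,
    ENNReal.toReal_ofReal hTδ.le, ENNReal.toReal_natCast, mul_div_cancel_right₀ _ hTδ.ne']

end IsPiecewiseIntegralCurve

section Expectation

variable {Ω : Type*} [MeasurableSpace Ω] {P : Measure Ω}

lemma measurable_volume_inter_preimage {X : Ω → ℝ → ℝ} (hX : Measurable (Function.uncurry X))
    {s B : Set ℝ} (hs : MeasurableSet s) (hB : MeasurableSet B) :
    Measurable fun ω => volume (s ∩ X ω ⁻¹' B) := by
  have h ω : volume (s ∩ X ω ⁻¹' B) =
      volume.restrict s (Prod.mk ω ⁻¹' (Function.uncurry X ⁻¹' B)) := by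
    rw [Measure.restrict_apply' hs, inter_comm]; rfl
  simpa only [h] using measurable_measure_prodMk_left (ν := volume.restrict s) (hX hB)

lemma integral_toReal_volume_inter_preimage [SFinite P] {X : Ω → ℝ → ℝ}
    (hX : Measurable (Function.uncurry X)) {s B : Set ℝ} (hs : MeasurableSet s)
    (hs' : volume s ≠ ∞) (hB : MeasurableSet B) {p : ℝ≥0∞}
    (hp : ∀ t ∈ s, P {ω | X ω t ∈ B} = p) :
    ∫ ω, (volume (s ∩ X ω ⁻¹' B)).toReal ∂P = (volume s * p).toReal := by
  rw [integral_toReal (measurable_volume_inter_preimage hX hs hB).aemeasurable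
    (ae_of_all _ fun ω => (measure_mono inter_subset_left).trans_lt hs'.lt_top)]
  congr 1
  calc ∫⁻ ω, volume (s ∩ X ω ⁻¹' B) ∂P
      = P.prod (volume.restrict s) (Function.uncurry X ⁻¹' B) := by
        rw [Measure.prod_apply (hX hB)]
        refine lintegral_congr fun ω => ?_
        rw [Measure.restrict_apply' hs, inter_comm]; rfl
    _ = ∫⁻ t in s, P {ω | X ω t ∈ B} := by rw [Measure.prod_apply_symm (hX hB)]; rfl
    _ = volume s * p := by rw [setLIntegral_congr_fun hs hp, setLIntegral_const, mul_comm]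

lemma setIntegral_nonneg_of_measure_preimage_eq [IsProbabilityMeasure P] {Y : Ω → ℝ}
    (hY : Measurable Y) {q : ℝ → ℝ}
    (hq : ∀ A, MeasurableSet A → P (Y ⁻¹' A) = ENNReal.ofReal (∫ y in A, q y))
    {A : Set ℝ} (hA : MeasurableSet A) : 0 ≤ ∫ y in A, q y := by
  have hint : Integrable q := by
    by_contra h
    simpa [integral_undef h] using hq univ MeasurableSet.univ
  have hone : ∫ y, q y = 1 := by
    have := hq univ MeasurableSet.univ
    rw [preimage_univ, measure_univ, setIntegral_univ] at this
    exact ENNReal.ofReal_eq_one.1 this.symm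
  by_contra! hneg
  have hAc : ∫ y in Aᶜ, q y = 1 := by
    refine ENNReal.ofReal_eq_one.1 ?_
    rw [← hq _ hA.compl, preimage_compl, prob_compl_eq_one_sub (hY hA), hq A hA,
      ENNReal.ofReal_eq_zero.2 hneg.le, tsub_zero]
  linarith [integral_add_compl hA hint]

lemma integral_toReal_volume_Ico_inter_preimage [IsProbabilityMeasure P] {X : Ω → ℝ → ℝ}
    (hX : Measurable (Function.uncurry X)) {H : ℝ} (hH : 0 ≤ H) {q : ℝ → ℝ}
    (hlaw : ∀ t ∈ Icc (0 : ℝ) H, ∀ A : Set ℝ, MeasurableSet A →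
      P {ω | X ω t ∈ A} = ENNReal.ofReal (∫ y in A, q y))
    {B : Set ℝ} (hB : MeasurableSet B) :
    ∫ ω, (volume (Ico 0 H ∩ X ω ⁻¹' B)).toReal ∂P = H * ∫ y in B, q y := by
  rw [integral_toReal_volume_inter_preimage hX measurableSet_Ico (by simp) hB
    fun t ht => hlaw t (Ico_subset_Icc_self ht) B hB, Real.volume_Ico, sub_zero,
    ENNReal.toReal_mul, ENNReal.toReal_ofReal hH, ENNReal.toReal_ofReal
    (setIntegral_nonneg_of_measure_preimage_eq (hX.comp measurable_prodMk_right)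
      (hlaw 0 ⟨le_rfl, hH⟩) hB)]

theorem integrable_and_integral_eq_of_tendsto {ι E : Type*} [NormedAddCommGroup E]
    [NormedSpace ℝ E] {l : Filter ι} [l.NeBot] [l.IsCountablyGenerated] {F : ι → Ω → E}
    {c : Ω → E} {bound : Ω → ℝ} {L : E}
    (hF : ∀ i, AEStronglyMeasurable (F i) P) (hbound : Integrable bound P)
    (hle : ∀ᶠ i in l, ∀ᵐ ω ∂P, ‖F i ω‖ ≤ bound ω)
    (hc : ∀ᵐ ω ∂P, Tendsto (fun i => F i ω) l (𝓝 (c ω)))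
    (hL : Tendsto (fun i => ∫ ω, F i ω ∂P) l (𝓝 L)) :
    Integrable c P ∧ ∫ ω, c ω ∂P = L := by
  have hcb : ∀ᵐ ω ∂P, ‖c ω‖ ≤ bound ω := by
    obtain ⟨v, hv⟩ := l.exists_seq_tendsto
    obtain ⟨k, hk⟩ := eventually_atTop.1 (hv.eventually hle)
    filter_upwards [ae_all_iff.2 fun j => hk (j + k) (Nat.le_add_left k j), hc] with ω hω hcω
    exact le_of_tendsto' ((hcω.comp (hv.comp (tendsto_add_atTop_nat k))).norm) hω
  exact ⟨hbound.mono' (aestronglyMeasurable_of_tendsto_ae l hF hc) hcb, tendsto_nhds_unique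
    (tendsto_integral_filter_of_dominated_convergence bound (.of_forall hF) hle hbound hc) hL⟩

end Expectation

theorem kac_rice_stationary_one_dim_general
    {Ω : Type*} [MeasurableSpace Ω] (P : Measure Ω) [IsProbabilityMeasure P]
    (H x : ℝ) (hH : 0 < H)
    (r : ℝ → ℝ) (hr : ContDiff ℝ 1 r) (hrx : r x ≠ 0)
    (X : Ω → ℝ → ℝ) (hX : Measurable (Function.uncurry X))
    (N : Ω → ℕ) (hNint : Integrable (fun ω => (N ω : ℝ)) P)
    (hpath : ∀ᵐ ω ∂P, ∃ (τ : ℕ → ℝ) (g : ℕ → ℝ → ℝ),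
      τ 0 = 0 ∧ τ (N ω + 1) = H ∧ (∀ i ≤ N ω, τ i < τ (i+1)) ∧
      (∀ i ≤ N ω, ∀ s ∈ Icc (τ i) (τ (i+1)),
        HasDerivWithinAt (g i) (r (g i s)) (Icc (τ i) (τ (i+1))) s) ∧
      (∀ i ≤ N ω, ∀ s ∈ Ico (τ i) (τ (i+1)), X ω s = g i s) ∧
      X ω H = g (N ω) H ∧
      (∀ i ≤ N ω, g i (τ i) ≠ x ∧ g i (τ (i+1)) ≠ x))
    (q : ℝ → ℝ)
    (hlaw : ∀ t ∈ Icc (0:ℝ) H, ∀ A : Set ℝ, MeasurableSet A →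
      P {ω | X ω t ∈ A} = ENNReal.ofReal (∫ y in A, q y))
    (hqcont : ∃ η > (0:ℝ), ContinuousOn q (Ioo (x - η) (x + η))) :
    Integrable (fun ω => ((crossSet H x (X ω)).ncard : ℝ)) P ∧
    (∫ ω, ((crossSet H x (X ω)).ncard : ℝ) ∂P) = H * |r x| * q x := by
  obtain ⟨η, hη, hqc⟩ := hqcont
  have hpw : ∀ᵐ ω ∂P, ∃ τ g, IsPiecewiseIntegralCurve r (X ω) H (N ω) τ g ∧
      ∀ i ≤ N ω, g i (τ i) ≠ x ∧ g i (τ (i + 1)) ≠ x :=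
    hpath.mono fun ω ⟨τ, g, h0, hH, hlt, hg, hXg, _, havoid⟩ =>
      ⟨τ, g, ⟨h0, hH, hlt, hg, hXg⟩, havoid⟩
  have hrc := hr.continuous
  have hU : ∀ᶠ y in 𝓝 x, r y ≠ 0 := hrc.continuousAt.eventually_ne hrx
  have hrinv : ContinuousAt (fun y => |r y|⁻¹) x := hrc.continuousAt.abs.inv₀ (abs_ne_zero.2 hrx)
  have hrinvm : StronglyMeasurableAtFilter (fun y => |r y|⁻¹) (𝓝 x) :=
    hrc.measurable.abs.inv.aestronglyMeasurable.stronglyMeasurableAtFilter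
  set T := fun δ => ∫ y in Icc (x - δ) (x + δ), |r y|⁻¹
  have hTpos : ∀ᶠ δ in 𝓝[>] 0, 0 < T δ :=
    eventually_pos_setIntegral_Icc_sub_add hrinv hrinvm (by positivity)
  have hST := eventually_lintegral_Icc_sub_add_eq_ofReal (f := fun y => |r y|⁻¹)
    (hrc.continuousOn.abs.inv₀ fun y hy => abs_ne_zero.2 hy) hU fun y => by positivity
  have hqx : x ∈ Ioo (x - η) (x + η) := ⟨by linarith, by linarith⟩
  have hlim := tendsto_setIntegral_Icc_sub_add_div_setIntegral
    (hqc.continuousAt (Ioo_mem_nhds hqx.1 hqx.2)) (hqc.stronglyMeasurableAtFilter isOpen_Ioo x hqx)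
    hrinv hrinvm (inv_ne_zero (abs_ne_zero.2 hrx))
  refine integrable_and_integral_eq_of_tendsto (l := 𝓝[>] (0 : ℝ)) (bound := fun ω => N ω + 1)
    (F := fun δ ω => (volume (Ico 0 H ∩ X ω ⁻¹' Icc (x - δ) (x + δ))).toReal / T δ)
    (fun δ => ((measurable_volume_inter_preimage hX measurableSet_Ico
      measurableSet_Icc).ennreal_toReal.div_const _).aestronglyMeasurable)
    (hNint.add (integrable_const 1)) ?_ ?_ ?_
  · filter_upwards [hTpos, nhdsWithin_le_nhds ((eventually_Icc_sub_add_subset hU).and hST)]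
      with δ hTδ ⟨hrδ, hSTδ⟩
    filter_upwards [hpw] with ω ⟨τ, g, hf, _⟩
    rw [Real.norm_of_nonneg (by positivity)]
    exact hf.toReal_volume_div_le isClosed_Icc hrδ hTδ hSTδ
  · filter_upwards [hpw] with ω ⟨τ, g, hf, havoid⟩
    exact hf.tendsto_toReal_volume_div havoid hU hTpos hST
  · convert (hlim.const_mul H).congr' (.of_forall fun δ => ?_) using 2
    · rw [div_inv_eq_mul]; ring
    rw [integral_div, integral_toReal_volume_Ico_inter_preimage hX hH.le hlaw measurableSet_Icc,
      mul_div_assoc]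

/-- **Stationary one-dimensional Kac–Rice formula.** Under the hypotheses of the
Dalmao–Mordecki formula, if for every `t ∈ [0,H]` the law of `X(t)` has a common density
`q` continuous near `x`, then `E[c_x(H)] = H |r(x)| q(x)`. -/
theorem kac_rice_stationary_one_dim
    {Ω : Type*} [MeasurableSpace Ω] (P : Measure Ω) [IsProbabilityMeasure P]
    (H x : ℝ) (hH : 0 < H)
    (r : ℝ → ℝ) (hr : ContDiff ℝ 1 r) (hrx : r x ≠ 0)
    (X : Ω → ℝ → ℝ) (hX : Measurable (Function.uncurry X))
    (N : Ω → ℕ) (hN : Measurable N) (hNint : Integrable (fun ω => (N ω : ℝ)) P)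
    (hpath : ∀ᵐ ω ∂P, ∃ (τ : ℕ → ℝ) (g : ℕ → ℝ → ℝ),
      τ 0 = 0 ∧ τ (N ω + 1) = H ∧ (∀ i ≤ N ω, τ i < τ (i+1)) ∧
      (∀ i ≤ N ω, ∀ s ∈ Icc (τ i) (τ (i+1)),
        HasDerivWithinAt (g i) (r (g i s)) (Icc (τ i) (τ (i+1))) s) ∧
      (∀ i ≤ N ω, ∀ s ∈ Ico (τ i) (τ (i+1)), X ω s = g i s) ∧
      X ω H = g (N ω) H ∧
      (∀ i ≤ N ω, g i (τ i) ≠ x ∧ g i (τ (i+1)) ≠ x))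
    (q : ℝ → ℝ)
    (hlaw : ∀ t ∈ Icc (0:ℝ) H, ∀ A : Set ℝ, MeasurableSet A →
      P {ω | X ω t ∈ A} = ENNReal.ofReal (∫ y in A, q y))
    (hqcont : ∃ η > (0:ℝ), ContinuousOn q (Ioo (x - η) (x + η))) :
    Integrable (fun ω => ((crossSet H x (X ω)).ncard : ℝ)) P ∧
    (∫ ω, ((crossSet H x (X ω)).ncard : ℝ) ∂P) = H * |r x| * q x :=
  kac_rice_stationary_one_dim_general P H x hH r hr hrx X hX N hNint hpath q hlaw hqcont
end
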